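/- arXiv:1103.2815 — 3 statements merged into one kernel-verified Lean document; each statement's English description precedes it below -/
import Mathlib

section
/- For every Borel probability measure φ on (0,∞) one has ξ̄ ≥ ξ ≥ 0, and consequently Ī(μ) ≥ I(μ) for every μ ∈ P([0,1)×[0,∞)). -/
open MeasureTheory Filter Topology Set ProbabilityTheory
open scoped ENNReal NNReal

noncomputable section

namespace RSP

/-! ### The state space `[0,1) × [0,∞)` -/

/-- Position space `[0,1)`. -/
abbrev Qs : Type := ↥(Ico (0:ℝ) 1)

/-- Momentum space `[0,∞)`. -/
abbrev Ps : Type := ↥(Ici (0:ℝ))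

/-- The state space `[0,1) × [0,∞)`. -/
abbrev Xs : Type := Qs × Ps

def q0X : Qs := ⟨0, by constructor <;> norm_num⟩
def p0X : Ps := ⟨0, by norm_num⟩
def x0X : Xs := (q0X, p0X)

/-- The inclusion of the state space into `ℝ × ℝ`. -/
def ιX : Xs → ℝ × ℝ := fun x => ((x.1 : ℝ), (x.2 : ℝ))

instance : MeasurableSpace (ProbabilityMeasure Xs) := borel _

/-! ### ξ and ξ̄ -/

/-- `ξ := sup {c ∈ ℝ : ∫ e^{c/p} φ(dp) < ∞} ∈ [0,∞]`. -/
def xi (φ : Measure ℝ) : ℝ≥0∞ :=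
  ⨆ (c : ℝ) (_ : ∫⁻ p, ENNReal.ofReal (Real.exp (c / p)) ∂φ < ⊤), ENNReal.ofReal c

/-- Conversion from `EReal` to `ℝ≥0∞` (nonnegative extended reals), clamping below. -/
def erealToENNReal (x : EReal) : ℝ≥0∞ := if x = ⊤ then ⊤ else ENNReal.ofReal x.toReal

/-- `ξ̄ := - lim_{δ↓0} liminf_{ε↓0} ε log φ([ε(1-δ), ε(1+δ))) ∈ [0,∞]`; since the inner
liminf is monotone in `δ`, the limit as `δ ↓ 0` is the infimum over `δ > 0`. -/
def xibar (φ : Measure ℝ) : ℝ≥0∞ :=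
  erealToENNReal (- ⨅ (δ : ℝ) (_ : 0 < δ),
    liminf (fun ε : ℝ => (ε : EReal) * ENNReal.log (φ (Ico (ε*(1-δ)) (ε*(1+δ)))))
      (𝓝[>] (0:ℝ)))

/-! ### Measures on the state space -/

/-- Lebesgue measure `dq` on `[0,1)`. -/
def lebQ : Measure Qs := Measure.comap Subtype.val volume

/-- The measure `λ_ℓ` on `[0,1)`: uniform on `[0,ℓ)` for `ℓ > 0`, and `δ_0` for `ℓ = 0`. -/
def lamQ (ℓ : ℝ) : Measure Qs :=
  if 0 < ℓ then (ENNReal.ofReal ℓ)⁻¹ • Measure.comap Subtype.val (volume.restrict (Ico 0 ℓ))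
  else Measure.dirac q0X

/-- A measure on `ℝ` viewed as a measure on `[0,∞)`. -/
def toPs (π : Measure ℝ) : Measure Ps := Measure.comap Subtype.val π

/-- The Dirac mass `δ_0(dp)` on `[0,∞)`. -/
def diracP0 : Measure Ps := Measure.dirac p0X

/-- First moment `π(p) = ∫ p π(dp)` of a measure on `ℝ` (as an extended real). -/
def moment (π : Measure ℝ) : ℝ≥0∞ := ∫⁻ p, ENNReal.ofReal p ∂π

/-- `π̃(dp) := p π(dp) / π(p)`. -/
def tilted (π : Measure ℝ) : Measure ℝ :=
  (moment π)⁻¹ • π.withDensity (fun p => ENNReal.ofReal p)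

/-- `μ(p) = ∫ p dμ` for a measure on the state space. -/
def muMom (μ : Measure Xs) : ℝ≥0∞ := ∫⁻ x, ENNReal.ofReal ((x.2 : ℝ)) ∂μ

open scoped Classical in
/-- Relative entropy `H(ν|μ) = ∫ log (dν/dμ) dν ∈ [0,∞]` (`= ∞` if `ν` is not
absolutely continuous with respect to `μ`). -/
def relEnt {α : Type*} [MeasurableSpace α] (ν μ : Measure α) : ℝ≥0∞ :=
  if ν ≪ μ then
    (∫⁻ x, ENNReal.ofReal (Real.log ((ν.rnDeriv μ x).toReal)) ∂ν) -
      (∫⁻ x, ENNReal.ofReal (- Real.log ((ν.rnDeriv μ x).toReal)) ∂ν)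
  else ⊤

/-- `μ = α₁ π(dp) dq + α₂ δ_0(dp) dq + α₃ δ_0(dp) λ_ℓ(dq)` with the constraints of the set
`Ω`: `α i ∈ [0,1]`, `α₁+α₂+α₃ = 1`, `π ∈ P((0,∞))` with `π(p) < ∞` and `ℓ ∈ [0,1)`. -/
def ReprData (μ : Measure Xs) (α₁ α₂ α₃ : ℝ) (π : Measure ℝ) (ℓ : ℝ) : Prop :=
  0 ≤ α₁ ∧ 0 ≤ α₂ ∧ 0 ≤ α₃ ∧ α₁ + α₂ + α₃ = 1 ∧ 0 ≤ ℓ ∧ ℓ < 1 ∧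
  IsProbabilityMeasure π ∧ π (Ioi (0:ℝ)) = 1 ∧ moment π < ⊤ ∧
  μ = ENNReal.ofReal α₁ • (lebQ.prod (toPs π)) + ENNReal.ofReal α₂ • (lebQ.prod diracP0)
      + ENNReal.ofReal α₃ • ((lamQ ℓ).prod diracP0)

/-- The set `Ω ⊂ P([0,1) × [0,∞))`. -/
def memOmega (μ : Measure Xs) : Prop := ∃ α₁ α₂ α₃ π ℓ, ReprData μ α₁ α₂ α₃ π ℓ

/-- The rate functional `I`. -/
def Ifun (φ : Measure ℝ) (μ : Measure Xs) : ℝ≥0∞ :=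
  ⨅ (α₁ : ℝ) (α₂ : ℝ) (α₃ : ℝ) (ℓ : ℝ) (π : Measure ℝ) (_ : ReprData μ α₁ α₂ α₃ π ℓ),
    muMom μ * relEnt (tilted π) φ
      + (ENNReal.ofReal α₂ + ENNReal.ofReal α₃ * (ENNReal.ofReal ℓ)⁻¹) * xi φ

/-- The rate functional `Ī`. -/
def Ibarfun (φ : Measure ℝ) (μ : Measure Xs) : ℝ≥0∞ :=
  ⨅ (α₁ : ℝ) (α₂ : ℝ) (α₃ : ℝ) (ℓ : ℝ) (π : Measure ℝ) (_ : ReprData μ α₁ α₂ α₃ π ℓ),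
    muMom μ * relEnt (tilted π) φ
      + ENNReal.ofReal α₂ * xi φ + ENNReal.ofReal α₃ * (ENNReal.ofReal ℓ)⁻¹ * xibar φ

/-! ### The particle process -/

/-- `S_n = τ_1 + ⋯ + τ_n`. -/
def Sn (τ : ℕ → ℝ) (n : ℕ) : ℝ := ∑ i ∈ Finset.range n, τ (i+1)

/-- `N_t = #{n ≥ 1 : S_n ≤ t}`, the number of renewals up to time `t`. -/
def Nt (τ : ℕ → ℝ) (t : ℝ) : ℕ := sSup {n | Sn τ n ≤ t}

/-- The undelayed process `(q̄_t, p̄_t) = ((t - S_{N_t})/τ_{N_t+1}, 1/τ_{N_t+1})`. -/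
def trajU (τ : ℕ → ℝ) (t : ℝ) : ℝ × ℝ :=
  ((t - Sn τ (Nt τ t)) / τ (Nt τ t + 1), (τ (Nt τ t + 1))⁻¹)

/-- `T_0 = (1-q)/p`, the time of the first collision. -/
def T0 (q p : ℝ) : ℝ := (1 - q) / p

/-- `T_n = T_0 + S_n`. -/
def Tn (q p : ℝ) (τ : ℕ → ℝ) (n : ℕ) : ℝ := T0 q p + Sn τ n

/-- The number of collisions with the wall before time `t`. -/
def ncoll (q p : ℝ) (τ : ℕ → ℝ) (t : ℝ) : ℕ := Set.ncard {n : ℕ | Tn q p τ n ≤ t}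

/-- The deterministic flow `F(q,p,t,(τ_n))`: the particle moves at speed `p` until the
first collision time `T_0` (i.e. while `p t < 1 - q`), after which it follows the
undelayed process built from `(τ_n)`, shifted by `T_0`. -/
def Fmap (q p t : ℝ) (τ : ℕ → ℝ) : ℝ × ℝ :=
  if p * t < 1 - q then (q + p * t, p) else trajU τ (t - T0 q p)

/-! ### Empirical measures and their laws -/

/-- The empirical measure `(1/t) ∫_0^t δ_{g(s)} ds` of a trajectory `g`, on `ℝ × ℝ`. -/
def empR (g : ℝ → ℝ × ℝ) (t : ℝ) : Measure (ℝ × ℝ) :=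
  (ENNReal.ofReal t)⁻¹ • Measure.map g (volume.restrict (Ico (0:ℝ) t))

/-- The empirical measure, as a measure on the state space `[0,1) × [0,∞)`. -/
def empX (g : ℝ → ℝ × ℝ) (t : ℝ) : Measure Xs := Measure.comap ιX (empR g t)

open scoped Classical in
/-- Bundle a measure on the state space as a probability measure (junk value if it is
not a probability measure). -/
def toProbX (μ : Measure Xs) : ProbabilityMeasure Xs :=
  if h : IsProbabilityMeasure μ then ⟨μ, h⟩ else ⟨Measure.dirac x0X, by infer_instance⟩

/-- The empirical measure as a probability measure on the state space. -/
def empPM (g : ℝ → ℝ × ℝ) (t : ℝ) : ProbabilityMeasure Xs := toProbX (empX g t)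

/-- The inter-arrival times `τ_n = 1/v_n` associated with speeds `v`. -/
def tauOf {Ω' : Type*} (v : ℕ → Ω' → ℝ) (ω : Ω') : ℕ → ℝ := fun n => (v n ω)⁻¹

/-- The law `P_t^{(q₀,p₀)}` of the empirical measure `μ_t` of the (delayed) process. -/
def lawEmpD {Ω' : Type*} [MeasurableSpace Ω'] (Pr : Measure Ω') (v : ℕ → Ω' → ℝ)
    (q₀ p₀ t : ℝ) : Measure (ProbabilityMeasure Xs) :=
  Measure.map (fun ω => empPM (fun s => Fmap q₀ p₀ s (tauOf v ω)) t) Pr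

/-- The law `P_t` of the empirical measure `μ̄_t` of the undelayed process. -/
def lawEmpU {Ω' : Type*} [MeasurableSpace Ω'] (Pr : Measure Ω') (v : ℕ → Ω' → ℝ)
    (t : ℝ) : Measure (ProbabilityMeasure Xs) :=
  Measure.map (fun ω => empPM (trajU (tauOf v ω)) t) Pr

/-- An i.i.d. sequence of speeds with marginal law `φ`, everywhere positive. -/
def IsIIDSpeeds {Ω' : Type*} [MeasurableSpace Ω'] (Pr : Measure Ω') (v : ℕ → Ω' → ℝ)
    (φ : Measure ℝ) : Prop :=
  iIndepFun v Pr ∧ (∀ i, Measure.map (v i) Pr = φ) ∧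
    ∀ i ω, 0 < v i ω

/-- `φ` is a (Borel) probability measure on `(0,∞)`. -/
def IsLawOnPos (φ : Measure ℝ) : Prop := IsProbabilityMeasure φ ∧ φ (Ioi (0:ℝ)) = 1


/-! ### The class `Λ` of test functions -/

/-- The open box `[0,1) × [0,∞)` inside `ℝ × ℝ`. -/
def boxX : Set (ℝ × ℝ) := Ico (0:ℝ) 1 ×ˢ Ici (0:ℝ)

/-- `f̄(q,v) := (1/q) ∫_0^q f(r,v) dr`. -/
def fbar (f : ℝ × ℝ → ℝ) (q v : ℝ) : ℝ := q⁻¹ * ∫ r in (0:ℝ)..q, f (r, v)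

/-- `C_f := ∫_{(0,∞)} e^{f̄(1,v)/v} φ(dv)`. -/
def Cf (φ : Measure ℝ) (f : ℝ × ℝ → ℝ) : ℝ≥0∞ :=
  ∫⁻ v in Ioi (0:ℝ), ENNReal.ofReal (Real.exp (fbar f 1 v / v)) ∂φ

/-- `D_f := sup_{s>0} ∫_{(0,1/s]} e^{s f̄(sv,v)} φ(dv)`. -/
def Df (φ : Measure ℝ) (f : ℝ × ℝ → ℝ) : ℝ≥0∞ :=
  ⨆ (s : ℝ) (_ : 0 < s), ∫⁻ v in Ioc (0:ℝ) s⁻¹, ENNReal.ofReal (Real.exp (s * fbar f (s*v) v)) ∂φ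

/-- The set `Λ` of bounded lower semicontinuous `f : [0,1) × [0,∞) → ℝ` with `C_f < 1`
and `D_f < ∞`. -/
def memLambda (φ : Measure ℝ) (f : ℝ × ℝ → ℝ) : Prop :=
  (∃ B, ∀ x ∈ boxX, |f x| ≤ B) ∧ LowerSemicontinuousOn f boxX ∧ Cf φ f < 1 ∧ Df φ f < ⊤

/-- The set `Ω̄` of elements of `Ω` admitting a representation with `α₂ = 0` and `ℓ > 0`. -/
def memOmegaBar (μ : Measure Xs) : Prop := ∃ α₁ α₃ π ℓ, ReprData μ α₁ 0 α₃ π ℓ ∧ 0 < ℓ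

open scoped Classical in
/-- The measure `γ(dq,dp)`: normalized `p⁻¹ φ(dp) dq` if `∫ p⁻¹ φ(dp) < ∞`, and
`δ_0(dp) dq` otherwise. -/
def gammaMeas (φ : Measure ℝ) : Measure Xs :=
  if (∫⁻ p, ENNReal.ofReal p⁻¹ ∂φ) < ⊤ then
    lebQ.prod (toPs ((∫⁻ p, ENNReal.ofReal p⁻¹ ∂φ)⁻¹ •
      φ.withDensity (fun p => ENNReal.ofReal p⁻¹)))
  else lebQ.prod diracP0

/-! ### The semigroup and its generator -/

/-- The closed box `[0,1] × [0,∞)`. -/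
def box1 : Set (ℝ × ℝ) := Icc (0:ℝ) 1 ×ˢ Ici (0:ℝ)

/-- The semigroup `P_t f (q,p) = E[f(F(q,p,t,(τ_n)))]`. -/
def Pop {Ω' : Type*} [MeasurableSpace Ω'] (Pr : Measure Ω') (v : ℕ → Ω' → ℝ)
    (f : ℝ × ℝ → ℝ) (t : ℝ) (x : ℝ × ℝ) : ℝ :=
  ∫ ω, f (Fmap x.1 x.2 t (tauOf v ω)) ∂Pr

/-- `g` is a bounded continuous function on `[0,1] × [0,∞)` such that
`P_t f = f + ∫_0^t P_s g ds` there; that is, `g` witnesses `f ∈ D(L)` with `L f = g`. -/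
def IsGenWitness {Ω' : Type*} [MeasurableSpace Ω'] (Pr : Measure Ω') (v : ℕ → Ω' → ℝ)
    (f g : ℝ × ℝ → ℝ) : Prop :=
  ContinuousOn g box1 ∧ (∃ B, ∀ x ∈ box1, |g x| ≤ B) ∧
    ∀ t ≥ (0:ℝ), ∀ x ∈ box1, Pop Pr v f t x = f x + ∫ s in (0:ℝ)..t, Pop Pr v g s x

/-- The candidate generator `(q,p) ↦ p ∂f/∂q (q,p)` (with the one-sided derivative in
`q ∈ [0,1]`). -/
def genForm (f : ℝ × ℝ → ℝ) : ℝ × ℝ → ℝ :=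
  fun x => x.2 * derivWithin (fun q => f (q, x.2)) (Icc (0:ℝ) 1) x.1


/-!
If `M = ∫ e^{c/p} φ(dp) < ∞` with `c > 0`, the exponential Chebyshev inequality gives
`φ([ε(1-δ), ε(1+δ))) ≤ M e^{-c/(ε(1+δ))}`, so `ε log φ([ε(1-δ), ε(1+δ))) ≤ ε log M - c/(1+δ)`.
Letting `ε ↓ 0` and then `δ ↓ 0` yields `ξ̄ ≥ c`, hence `ξ̄ ≥ ξ`. The functionals `I` and `Ī`
differ only in that `Ī` charges `α₃ ℓ⁻¹` with `ξ̄` instead of `ξ`, so `I ≤ Ī`.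
-/
lemma measure_Ico_le_lintegral_exp_mul_exp_neg {φ : Measure ℝ} (hpos : ∀ᵐ p ∂φ, 0 < p)
    {c : ℝ} (hc : 0 ≤ c) (a b : ℝ) :
    φ (Ico a b) ≤ (∫⁻ p, ENNReal.ofReal (Real.exp (c / p)) ∂φ)
      * ENNReal.ofReal (Real.exp (-(c / b))) := by
  have hsub : Ico a b ≤ᵐ[φ] {p | ENNReal.ofReal (Real.exp (c / b)) ≤
      ENNReal.ofReal (Real.exp (c / p))} := by
    filter_upwards [hpos] with p hp hpab
    exact ENNReal.ofReal_le_ofReal (Real.exp_le_exp.2 (div_le_div_of_nonneg_left hc hp hpab.2.le))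
  calc φ (Ico a b)
      ≤ φ {p | ENNReal.ofReal (Real.exp (c / b)) ≤ ENNReal.ofReal (Real.exp (c / p))} :=
        measure_mono_ae hsub
    _ ≤ (∫⁻ p, ENNReal.ofReal (Real.exp (c / p)) ∂φ) / ENNReal.ofReal (Real.exp (c / b)) :=
        meas_ge_le_lintegral_div (by fun_prop)
          (ENNReal.ofReal_pos.2 (Real.exp_pos _)).ne' ENNReal.ofReal_ne_top
    _ = _ := by
        rw [div_eq_mul_inv, ← ENNReal.ofReal_inv_of_pos (Real.exp_pos _), ← Real.exp_neg]

lemma liminf_mul_log_measure_Ico_le {φ : Measure ℝ} (hpos : ∀ᵐ p ∂φ, 0 < p) {c : ℝ}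
    (hc : 0 ≤ c) (hint : ∫⁻ p, ENNReal.ofReal (Real.exp (c / p)) ∂φ < ⊤) (a : ℝ) {b : ℝ}
    (hb : 0 < b) :
    liminf (fun ε : ℝ => (ε : EReal) * ENNReal.log (φ (Ico (ε * a) (ε * b)))) (𝓝[>] 0)
      ≤ ((-(c / b) : ℝ) : EReal) := by
  set M := ∫⁻ p, ENNReal.ofReal (Real.exp (c / p)) ∂φ
  set K := M.toReal + 1
  have hK : 0 < K := by positivity
  have hbound : ∀ᶠ ε : ℝ in 𝓝[>] 0, (ε : EReal) * ENNReal.log (φ (Ico (ε * a) (ε * b)))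
      ≤ ((ε * Real.log K - c / b : ℝ) : EReal) := by
    filter_upwards [self_mem_nhdsWithin] with ε (hε : 0 < ε)
    have hmeas : φ (Ico (ε * a) (ε * b)) ≤ ENNReal.ofReal (K * Real.exp (-(c / (ε * b)))) := by
      refine (measure_Ico_le_lintegral_exp_mul_exp_neg hpos hc _ _).trans ?_
      rw [ENNReal.ofReal_mul hK.le]
      gcongr
      exact ENNReal.le_ofReal_iff_toReal_le hint.ne hK.le |>.2 (by linarith)
    have hlog : ENNReal.log (φ (Ico (ε * a) (ε * b)))
        ≤ ((Real.log K - c / (ε * b) : ℝ) : EReal) := by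
      refine (ENNReal.log_monotone hmeas).trans_eq ?_
      rw [ENNReal.log_ofReal_of_pos (by positivity), Real.log_mul hK.ne' (Real.exp_ne_zero _),
        Real.log_exp, sub_eq_add_neg]
    calc (ε : EReal) * ENNReal.log (φ (Ico (ε * a) (ε * b)))
        ≤ (ε : EReal) * ((Real.log K - c / (ε * b) : ℝ) : EReal) :=
          mul_le_mul_of_nonneg_left hlog (EReal.coe_nonneg.2 hε.le)
      _ = ((ε * Real.log K - c / b : ℝ) : EReal) := by
          rw [← EReal.coe_mul]
          congr 1
          field_simp
  have hlim : Tendsto (fun ε : ℝ => ((ε * Real.log K - c / b : ℝ) : EReal)) (𝓝[>] 0)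
      (𝓝 ((-(c / b) : ℝ) : EReal)) := by
    rw [EReal.tendsto_coe]
    exact (((continuous_id.mul continuous_const).sub continuous_const).tendsto' 0 _
      (by simp)).mono_left nhdsWithin_le_nhds
  exact (liminf_le_liminf hbound).trans_eq hlim.liminf_eq

theorem xi_le_xibar {φ : Measure ℝ} (hpos : ∀ᵐ p ∂φ, 0 < p) : xi φ ≤ xibar φ := by
  refine iSup₂_le fun c hint => ?_
  rcases le_or_gt c 0 with hc | hc
  · simp [ENNReal.ofReal_of_nonpos hc]
  set J := ⨅ (δ : ℝ) (_ : 0 < δ),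
    liminf (fun ε : ℝ => (ε : EReal) * ENNReal.log (φ (Ico (ε * (1 - δ)) (ε * (1 + δ)))))
      (𝓝[>] 0)
  have hJ : ∀ᶠ δ : ℝ in 𝓝[>] 0, J ≤ ((-(c / (1 + δ)) : ℝ) : EReal) := by
    filter_upwards [self_mem_nhdsWithin] with δ (hδ : 0 < δ)
    exact (iInf₂_le δ hδ).trans
      (liminf_mul_log_measure_Ico_le hpos hc.le hint (1 - δ) (by linarith))
  have hlim : Tendsto (fun δ : ℝ => ((-(c / (1 + δ)) : ℝ) : EReal)) (𝓝[>] 0)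
      (𝓝 ((-c : ℝ) : EReal)) := by
    rw [EReal.tendsto_coe]
    have hcont : ContinuousAt (fun δ : ℝ => -(c / (1 + δ))) 0 :=
      (continuousAt_const.div (continuousAt_const.add continuousAt_id) (by norm_num)).neg
    simpa using hcont.continuousWithinAt.tendsto (s := Ioi 0)
  have hJc : J ≤ ((-c : ℝ) : EReal) := ge_of_tendsto hlim hJ
  show (c : EReal).toENNReal ≤ (-J).toENNReal
  refine EReal.toENNReal_le_toENNReal (EReal.le_neg_of_le_neg ?_)
  simpa using hJc

lemma Ifun_le_Ibarfun_of_xi_le_xibar {φ : Measure ℝ} (h : xi φ ≤ xibar φ) (μ : Measure Xs) :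
    Ifun φ μ ≤ Ibarfun φ μ := by
  refine iInf_mono fun α₁ => iInf_mono fun α₂ => iInf_mono fun α₃ => iInf_mono fun ℓ =>
    iInf_mono fun π => iInf_mono fun _ => ?_
  rw [add_mul, ← add_assoc]
  gcongr

/-- For every Borel probability measure `φ` on `(0,∞)` one has
`ξ̄ ≥ ξ ≥ 0`, and consequently `Ī(μ) ≥ I(μ)` for every `μ ∈ P([0,1) × [0,∞))`. -/
theorem xi_le_xibar_and_Ifun_le_Ibarfun (φ : Measure ℝ) (hφ : IsLawOnPos φ) :
    xi φ ≤ xibar φ ∧ ∀ μ : ProbabilityMeasure Xs, Ifun φ ↑μ ≤ Ibarfun φ ↑μ := by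
  obtain ⟨hprob, hφpos⟩ := hφ
  have hpos : ∀ᵐ p ∂φ, p ∈ Ioi 0 :=
    mem_ae_iff.2 ((prob_compl_eq_zero_iff measurableSet_Ioi).2 hφpos)
  have hxi := xi_le_xibar hpos
  exact ⟨hxi, fun μ => Ifun_le_Ibarfun_of_xi_le_xibar hxi μ⟩

end RSP
end
end

section
/- Let Z := Σ_{j≥0} e^{−2^j} and φ := Z^{-1} Σ_{j≥0} e^{−2^j} δ_{2^{−j}}, a probability measure on (0,∞). Then ξ = 1 and ξ̄ = +∞. In particular the inequality ξ̄ ≥ ξ can be strict. -/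
open MeasureTheory Filter Topology Set ProbabilityTheory
open scoped ENNReal NNReal

noncomputable section

namespace RSP

/-!
For `φ = Z⁻¹ ∑ⱼ e^{-2^j} δ_{2^{-j}}` one has `∫ e^{c/p} φ(dp) = Z⁻¹ ∑ⱼ e^{(c-1) 2^j}`, which is
finite exactly when `c < 1`; hence `ξ = 1`. On the other hand `φ` lives on the dyadic points
`2^{-j}`, which leave gaps of relative size `1/2` between consecutive points: with `δ = 1/4` and
`ε = (3/4) 2^{-k}` the window `[ε(1-δ), ε(1+δ))` has `φ`-mass `0`, so `ε log φ(…) = -∞` along a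
sequence `ε ↓ 0`, and `ξ̄ = ∞`.
-/

lemma xi_eq_ofReal_of_lintegral_lt_top_iff {φ : Measure ℝ} {a : ℝ}
    (h : ∀ c : ℝ, ∫⁻ p, ENNReal.ofReal (Real.exp (c / p)) ∂φ < ⊤ ↔ c < a) :
    xi φ = ENNReal.ofReal a := by
  refine le_antisymm (iSup₂_le fun c hc => ENNReal.ofReal_le_ofReal ((h c).1 hc).le) ?_
  refine le_of_forall_lt fun b hb => ?_
  obtain ⟨d, hbd, hda⟩ := exists_between hb
  have hd : d ≠ ⊤ := (hda.trans ENNReal.ofReal_lt_top).ne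
  calc b < d := hbd
    _ = ENNReal.ofReal d.toReal := (ENNReal.ofReal_toReal hd).symm
    _ ≤ xi φ := le_iSup₂_of_le d.toReal ((h _).2 (ENNReal.toReal_lt_of_lt_ofReal hda)) le_rfl

lemma xibar_eq_top_of_frequently_measure_Ico_eq_zero {φ : Measure ℝ} {δ : ℝ} (hδ : 0 < δ)
    (h : ∃ᶠ ε in 𝓝[>] (0:ℝ), φ (Ico (ε * (1 - δ)) (ε * (1 + δ))) = 0) :
    xibar φ = ⊤ := by
  have hliminf : liminf (fun ε : ℝ => (ε : EReal) *
      ENNReal.log (φ (Ico (ε*(1-δ)) (ε*(1+δ))))) (𝓝[>] (0:ℝ)) = ⊥ := by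
    refine le_bot_iff.1 (liminf_le_of_frequently_le' ?_)
    refine (h.and_eventually self_mem_nhdsWithin).mono fun ε ⟨hnull, hε⟩ => ?_
    rw [hnull, ENNReal.log_zero, EReal.coe_mul_bot_of_pos hε]
  have hinf : (⨅ (δ : ℝ) (_ : 0 < δ), liminf (fun ε : ℝ => (ε : EReal) *
      ENNReal.log (φ (Ico (ε*(1-δ)) (ε*(1+δ))))) (𝓝[>] (0:ℝ))) = ⊥ :=
    le_bot_iff.1 (hliminf ▸ iInf₂_le δ hδ)
  simp [xibar, erealToENNReal, hinf]

lemma tsum_ofReal_exp_mul_two_pow_lt_top_iff (r : ℝ) :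
    ∑' j : ℕ, ENNReal.ofReal (Real.exp (r * 2 ^ j)) < ⊤ ↔ r < 0 := by
  refine ⟨fun hfin => not_le.1 fun hr => hfin.ne (top_le_iff.1 ?_), fun hr => ?_⟩
  · calc (⊤ : ℝ≥0∞) = ∑' _ : ℕ, 1 :=
          (ENNReal.tsum_const_eq_top_of_ne_zero one_ne_zero).symm
      _ ≤ _ := ENNReal.tsum_le_tsum fun j => by
        rw [ENNReal.one_le_ofReal, Real.one_le_exp_iff]
        positivity
  · have hsum : Summable fun j : ℕ => Real.exp (r * 2 ^ j) :=
      Real.summable_exp_nat_mul_of_ge hr fun j => mod_cast (Nat.lt_two_pow_self).le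
    rw [← ENNReal.ofReal_tsum_of_nonneg (fun j => (Real.exp_pos _).le) hsum]
    exact ENNReal.ofReal_lt_top

lemma inv_two_pow_notMem_Ioo (j k : ℕ) :
    ((2:ℝ) ^ j)⁻¹ ∉ Ioo ((2:ℝ) ^ (k + 1))⁻¹ ((2:ℝ) ^ k)⁻¹ := by
  rintro ⟨h₁, h₂⟩
  rw [inv_lt_inv₀ (by positivity) (by positivity),
    pow_lt_pow_iff_right₀ one_lt_two] at h₁ h₂
  omega

lemma xibar_eq_top_of_ae_mem_range_inv_two_pow {φ : Measure ℝ}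
    (hφ : ∀ᵐ p ∂φ, p ∈ range fun j : ℕ => ((2:ℝ) ^ j)⁻¹) : xibar φ = ⊤ := by
  refine xibar_eq_top_of_frequently_measure_Ico_eq_zero (δ := 1/4) (by norm_num) ?_
  have hε : Tendsto (fun k : ℕ => (4/3 * (2:ℝ) ^ k)⁻¹) atTop (𝓝[>] 0) :=
    tendsto_inv_atTop_nhdsGT_zero.comp
      ((tendsto_pow_atTop_atTop_of_one_lt one_lt_two).const_mul_atTop (by norm_num))
  refine hε.frequently (Frequently.of_forall fun k => measure_mono_null ?_ (ae_iff.1 hφ))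
  -- `[ε(1-δ), ε(1+δ)) = [(9/16) 2⁻ᵏ, (15/16) 2⁻ᵏ)` lies strictly between `2⁻ᵏ⁻¹` and `2⁻ᵏ`
  rintro p ⟨hp₁, hp₂⟩ ⟨j, rfl⟩
  refine inv_two_pow_notMem_Ioo j k ⟨lt_of_lt_of_le ?_ hp₁, hp₂.trans ?_⟩
  · rw [pow_succ]; field_simp; norm_num
  · field_simp; norm_num

def dyadicZ : ℝ := ∑' j : ℕ, Real.exp (-(2 ^ j : ℝ))

def dyadicLaw : Measure ℝ := (ENNReal.ofReal dyadicZ)⁻¹ •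
  Measure.sum (fun j : ℕ =>
    ENNReal.ofReal (Real.exp (-(2 ^ j : ℝ))) • Measure.dirac (((2:ℝ) ^ j)⁻¹))

lemma dyadicZ_pos : 0 < dyadicZ := by
  have hsum : Summable fun j : ℕ => Real.exp (-(2 ^ j : ℝ)) := by
    simpa using Real.summable_exp_nat_mul_of_ge (c := -1) (by norm_num)
      fun j => mod_cast (Nat.lt_two_pow_self (n := j)).le
  exact hsum.tsum_pos (fun j => (Real.exp_pos _).le) 0 (Real.exp_pos _)

lemma lintegral_dyadicLaw (f : ℝ → ℝ≥0∞) :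
    ∫⁻ p, f p ∂dyadicLaw = (ENNReal.ofReal dyadicZ)⁻¹ *
      ∑' j : ℕ, ENNReal.ofReal (Real.exp (-(2 ^ j : ℝ))) * f ((2:ℝ) ^ j)⁻¹ := by
  simp only [dyadicLaw, lintegral_smul_measure, lintegral_sum_measure, lintegral_dirac,
    smul_eq_mul]

lemma lintegral_exp_div_dyadicLaw_lt_top_iff (c : ℝ) :
    ∫⁻ p, ENNReal.ofReal (Real.exp (c / p)) ∂dyadicLaw < ⊤ ↔ c < 1 := by
  have hterm (j : ℕ) : ENNReal.ofReal (Real.exp (-(2 ^ j : ℝ))) *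
      ENNReal.ofReal (Real.exp (c / ((2:ℝ) ^ j)⁻¹)) =
        ENNReal.ofReal (Real.exp ((c - 1) * 2 ^ j)) := by
    rw [← ENNReal.ofReal_mul (Real.exp_pos _).le, ← Real.exp_add, div_inv_eq_mul]
    ring_nf
  have hZ : (ENNReal.ofReal dyadicZ)⁻¹ ≠ ⊤ :=
    ENNReal.inv_ne_top.2 (ENNReal.ofReal_pos.2 dyadicZ_pos).ne'
  have hZ' : (ENNReal.ofReal dyadicZ)⁻¹ ≠ 0 := ENNReal.inv_ne_zero.2 ENNReal.ofReal_ne_top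
  rw [lintegral_dyadicLaw, tsum_congr hterm, ← sub_neg (a := c),
    ← tsum_ofReal_exp_mul_two_pow_lt_top_iff]
  simp [lt_top_iff_ne_top, ENNReal.mul_eq_top, hZ, hZ']

lemma ae_dyadicLaw_mem_range : ∀ᵐ p ∂dyadicLaw, p ∈ range fun j : ℕ => ((2:ℝ) ^ j)⁻¹ := by
  have hmeas : MeasurableSet (range fun j : ℕ => ((2:ℝ) ^ j)⁻¹) :=
    (countable_range _).measurableSet
  refine Measure.ae_smul_measure (Measure.ae_sum_iff.2 fun j => ?_) _
  exact Measure.ae_smul_measure ((ae_dirac_iff hmeas).2 (mem_range_self j)) _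

lemma xi_dyadicLaw : xi dyadicLaw = 1 := by
  rw [xi_eq_ofReal_of_lintegral_lt_top_iff lintegral_exp_div_dyadicLaw_lt_top_iff,
    ENNReal.ofReal_one]

lemma xibar_dyadicLaw : xibar dyadicLaw = ⊤ :=
  xibar_eq_top_of_ae_mem_range_inv_two_pow ae_dyadicLaw_mem_range

/-- For `φ := Z⁻¹ ∑_{j ≥ 0} e^{-2^j} δ_{2^{-j}}` one has `ξ = 1` and
`ξ̄ = +∞`; in particular the inequality `ξ̄ ≥ ξ` can be strict. -/
theorem xi_eq_one_and_xibar_eq_top_of_example :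
    let Z : ℝ := ∑' j : ℕ, Real.exp (-(2 ^ j : ℝ))
    let φ : Measure ℝ := (ENNReal.ofReal Z)⁻¹ •
      Measure.sum (fun j : ℕ =>
        ENNReal.ofReal (Real.exp (-(2 ^ j : ℝ))) • Measure.dirac (((2:ℝ) ^ j)⁻¹))
    xi φ = 1 ∧ xibar φ = ⊤ ∧ xi φ < xibar φ := by
  show xi dyadicLaw = 1 ∧ xibar dyadicLaw = ⊤ ∧ xi dyadicLaw < xibar dyadicLaw
  rw [xi_dyadicLaw, xibar_dyadicLaw]
  exact ⟨rfl, rfl, ENNReal.one_lt_top⟩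

end RSP
end
end

section
/- Say a bounded continuous f : [0,1]×[0,∞) → ℝ belongs to D(L) if there is a bounded continuous Lf : [0,1]×[0,∞) → ℝ with P_t f(q,p) = f(q,p) + ∫_0^t P_s Lf(q,p) ds for all t ≥ 0 and all (q,p). Then f ∈ D(L) if and only if f is bounded continuous, (q,p) ↦ p·∂f/∂q(q,p) is bounded continuous, and f satisfies the boundary condition f(1,p) = ∫_{(0,∞)} f(0,1/τ) ψ(dτ) for all p ∈ [0,∞); in that case Lf(q,p) = p·∂f/∂q(q,p). -/
open MeasureTheory Filter Topology Set ProbabilityTheory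
open scoped ENNReal NNReal

noncomputable section

namespace RSP

/-!
Started at `(q, p)`, the particle flies freely along `s ↦ (q + p s, p)` until it reaches the wall,
and during such a flight the equation `P_t f = f + ∫₀ᵗ P_s g ds` is deterministic. From `(0, p)` it
reads `f (y, p) = f (0, p) + p⁻¹ ∫₀ʸ g (u, p) du`, so `f (·, p)` is differentiable and
`g = p ∂f/∂q`; from `(q, 0)` with `q < 1` nothing moves, so `g (q, 0) = 0`; from `(1, p)` the
particle restarts at once at `(0, v₁)`, and letting `t ↓ 0` gives the boundary condition.

Conversely, the fundamental theorem of calculus on each flight between two collisions gives, along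
every trajectory, `f (X_t) - f (x) - ∫₀ᵗ p ∂f/∂q (X_s) ds = ∑_{k ≤ N} (f (0, v_{k+1}) - c)`, where
the boundary condition has replaced each value `f (1, ·)` at the wall by `c = E f (0, v₁)`. The
`k`-th term has mean zero, `v_{k+1}` is independent of the event `{S_k ≤ t - T_0}` that the term
is present, and a Chernoff bound gives `∑_k P(S_k ≤ t - T_0) < ∞`; so the sum has expectation zero
(Wald's identity), and Fubini turns the expectation of the pathwise identity into the integral
equation with `L f = p ∂f/∂q`.
-/

section Renewal

variable {τ : ℕ → ℝ}

theorem Sn_zero : Sn τ 0 = 0 := Finset.sum_range_zero _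

theorem Sn_succ (n : ℕ) : Sn τ (n + 1) = Sn τ n + τ (n + 1) := Finset.sum_range_succ _ _

theorem Sn_strictMono (hpos : ∀ n, 0 < τ n) : StrictMono (Sn τ) :=
  strictMono_nat_of_lt_succ fun n => by rw [Sn_succ]; linarith [hpos (n + 1)]

theorem Sn_nonneg (hpos : ∀ n, 0 < τ n) (n : ℕ) : 0 ≤ Sn τ n :=
  Sn_zero (τ := τ) ▸ (Sn_strictMono hpos).monotone n.zero_le

theorem Nt_of_neg (hpos : ∀ n, 0 < τ n) {u : ℝ} (hu : u < 0) : Nt τ u = 0 := by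
  have : {n | Sn τ n ≤ u} = ∅ :=
    eq_empty_of_forall_notMem fun n hn => (hu.trans_le (Sn_nonneg hpos n)).not_ge hn
  rw [Nt, this, csSup_empty, bot_eq_zero]

theorem bddAbove_setOf_Sn_le (hS : Tendsto (Sn τ) atTop atTop) (u : ℝ) :
    BddAbove {n | Sn τ n ≤ u} := by
  obtain ⟨m, hm⟩ := (hS.eventually_gt_atTop u).exists_forall_of_atTop
  exact ⟨m, fun k hk => not_lt.1 fun hmk => (hm k hmk.le).not_ge hk⟩

theorem Sn_Nt_le (hS : Tendsto (Sn τ) atTop atTop) {u : ℝ} (hu : 0 ≤ u) : Sn τ (Nt τ u) ≤ u :=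
  Nat.sSup_mem ⟨0, by simpa [Sn_zero] using hu⟩ (bddAbove_setOf_Sn_le hS u)

theorem lt_Sn_Nt_succ (hS : Tendsto (Sn τ) atTop atTop) (u : ℝ) : u < Sn τ (Nt τ u + 1) :=
  not_le.1 fun h => (Nt τ u).lt_succ_self.not_ge (le_csSup (bddAbove_setOf_Sn_le hS u) h)

variable (hpos : ∀ n, 0 < τ n) (hS : Tendsto (Sn τ) atTop atTop)
include hpos hS

theorem Sn_le_iff_le_Nt {u : ℝ} (hu : 0 ≤ u) (k : ℕ) : Sn τ k ≤ u ↔ k ≤ Nt τ u := by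
  refine ⟨fun h => le_csSup (bddAbove_setOf_Sn_le hS u) h, fun h => ?_⟩
  exact ((Sn_strictMono hpos).monotone h).trans (Sn_Nt_le hS hu)

theorem Nt_eq_of_le_of_lt {u : ℝ} {n : ℕ} (h₁ : Sn τ n ≤ u) (h₂ : u < Sn τ (n + 1)) :
    Nt τ u = n := by
  have hu : 0 ≤ u := (Sn_nonneg hpos n).trans h₁
  have h₃ := (Sn_le_iff_le_Nt hpos hS hu n).1 h₁
  have h₄ : Nt τ u < n + 1 := (Sn_strictMono hpos).lt_iff_lt.1 ((Sn_Nt_le hS hu).trans_lt h₂)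
  omega

-- The case `n = 0` covers `u < 0`, where `Nt τ u = sSup ∅ = 0`.
theorem Nt_eq_iff (u : ℝ) (n : ℕ) :
    Nt τ u = n ↔ (n = 0 ∨ Sn τ n ≤ u) ∧ u < Sn τ (n + 1) := by
  constructor
  · rintro rfl
    refine ⟨?_, lt_Sn_Nt_succ hS u⟩
    rcases lt_or_ge u 0 with hu | hu
    · exact Or.inl (Nt_of_neg hpos hu)
    · exact Or.inr (Sn_Nt_le hS hu)
  · rintro ⟨rfl | h₁, h₂⟩
    · rcases lt_or_ge u 0 with hu | hu
      · exact Nt_of_neg hpos hu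
      · exact Nt_eq_of_le_of_lt hpos hS (by rwa [Sn_zero]) h₂
    · exact Nt_eq_of_le_of_lt hpos hS h₁ h₂

theorem trajU_eq_of_le_of_lt {u : ℝ} {n : ℕ} (h₁ : Sn τ n ≤ u) (h₂ : u < Sn τ (n + 1)) :
    trajU τ u = ((τ (n + 1))⁻¹ * (u - Sn τ n), (τ (n + 1))⁻¹) := by
  rw [trajU, Nt_eq_of_le_of_lt hpos hS h₁ h₂, div_eq_inv_mul]

end Renewal

section Flow

variable {τ : ℕ → ℝ} {q p t : ℝ}

theorem Fmap_of_lt (h : p * t < 1 - q) : Fmap q p t τ = (q + p * t, p) := if_pos h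

theorem add_mul_T0 (hcol : 0 < p ∨ q = 1) : q + p * T0 q p = 1 := by
  rcases hcol with hp | rfl
  · rw [T0, mul_div_cancel₀ _ hp.ne']; ring
  · simp [T0]

theorem Tn_zero : Tn q p τ 0 = T0 q p := by rw [Tn, Sn_zero, add_zero]

theorem Tn_succ (k : ℕ) : Tn q p τ (k + 1) = Tn q p τ k + τ (k + 1) := by
  rw [Tn, Tn, Sn_succ, add_assoc]

-- For `p = 0` the junk value `T0 q 0 = 0` makes a particle at `q = 1` hit the wall at once.
theorem collided_of_not_lt (hq : q ≤ 1) (hp : 0 ≤ p) (ht : 0 ≤ t) (h : ¬ p * t < 1 - q) :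
    (0 < p ∨ q = 1) ∧ T0 q p ≤ t := by
  rcases hp.lt_or_eq with hp | rfl
  · refine ⟨Or.inl hp, ?_⟩
    rw [T0, div_le_iff₀ hp]
    linarith
  · have hq1 : q = 1 := by linarith
    subst hq1
    simpa [T0] using ht

theorem mem_Ico_Tn_Nt (hS : Tendsto (Sn τ) atTop atTop) (ht : T0 q p ≤ t) :
    t ∈ Ico (Tn q p τ (Nt τ (t - T0 q p))) (Tn q p τ (Nt τ (t - T0 q p) + 1)) := by
  have h₁ := Sn_Nt_le hS (sub_nonneg.2 ht)
  have h₂ := lt_Sn_Nt_succ hS (t - T0 q p)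
  constructor <;> simp only [Tn] <;> linarith

theorem T0_nonneg (hq : q ≤ 1) (hp : 0 ≤ p) : 0 ≤ T0 q p := div_nonneg (by linarith) hp

variable (hpos : ∀ n, 0 < τ n) (hS : Tendsto (Sn τ) atTop atTop)
include hpos hS

theorem Fmap_eq_of_mem_Ico (hp : 0 ≤ p) (hcol : 0 < p ∨ q = 1) (k : ℕ) {s : ℝ}
    (hs : s ∈ Ico (Tn q p τ k) (Tn q p τ (k + 1))) :
    Fmap q p s τ = ((τ (k + 1))⁻¹ * (s - Tn q p τ k), (τ (k + 1))⁻¹) := by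
  have hT0s : T0 q p ≤ s := le_trans (by simp [Tn, Sn_nonneg hpos]) hs.1
  have hcoll : ¬ p * s < 1 - q := by
    have := mul_le_mul_of_nonneg_left hT0s hp
    linarith [add_mul_T0 hcol]
  obtain ⟨hs₁, hs₂⟩ := hs
  rw [Tn] at hs₁ hs₂
  rw [Fmap, if_neg hcoll, trajU_eq_of_le_of_lt hpos hS (n := k) (by linarith) (by linarith), Tn]
  ring_nf

theorem Fmap_mem_box1 (hx : (q, p) ∈ box1) (ht : 0 ≤ t) : Fmap q p t τ ∈ box1 := by
  obtain ⟨⟨hq0, hq1⟩, hp : 0 ≤ p⟩ := hx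
  by_cases h : p * t < 1 - q
  · rw [Fmap_of_lt h]
    have := mul_nonneg hp ht
    exact ⟨⟨by linarith, by linarith⟩, hp⟩
  · obtain ⟨hcol, hT0⟩ := collided_of_not_lt hq1 hp ht h
    set N := Nt τ (t - T0 q p)
    have hmem := mem_Ico_Tn_Nt hS hT0
    rw [Fmap_eq_of_mem_Ico hpos hS hp hcol N hmem]
    have hτ := hpos (N + 1)
    rw [Tn_succ] at hmem
    refine ⟨⟨mul_nonneg (inv_nonneg.2 hτ.le) (by linarith [hmem.1]), ?_⟩, inv_nonneg.2 hτ.le⟩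
    rw [inv_mul_le_iff₀ hτ]
    linarith [hmem.2]

theorem Fmap_one_of_lt (hp : 0 ≤ p) (ht : t ∈ Ico 0 (τ 1)) :
    Fmap 1 p t τ = ((τ 1)⁻¹ * t, (τ 1)⁻¹) := by
  have hT : Tn 1 p τ 0 = 0 := by simp [Tn_zero, T0]
  have := Fmap_eq_of_mem_Ico hpos hS hp (Or.inr rfl) 0 (s := t)
    (by rwa [Tn_succ, hT, zero_add])
  rwa [hT, sub_zero] at this

theorem flow_eqOn_segment (hx : (q, p) ∈ box1) (hcol : 0 < p ∨ q = 1) (k : ℕ) :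
    EqOn (fun s => Fmap q p s τ) (fun s => (0 + (τ (k + 1))⁻¹ * (s - Tn q p τ k), (τ (k + 1))⁻¹))
      (Ioo (Tn q p τ k) (Tn q p τ (k + 1))) := fun s hs => by
  simp [Fmap_eq_of_mem_Ico hpos hS hx.2 hcol k (Ioo_subset_Ico_self hs)]

end Flow

theorem mapsTo_line_box1 {x₀ p a b : ℝ} (hp : 0 ≤ p) (hx₀ : 0 ≤ x₀)
    (hx₁ : x₀ + p * (b - a) ≤ 1) : MapsTo (fun s => (x₀ + p * (s - a), p)) (Icc a b) box1 :=
  fun s hs => ⟨⟨by nlinarith [hs.1], by nlinarith [hs.2]⟩, mem_Ici.2 hp⟩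

section LineIntegral

variable {f D : ℝ × ℝ → ℝ} {γ : ℝ → ℝ × ℝ} {x₀ p a b : ℝ}
  (hγ : EqOn γ (fun s => (x₀ + p * (s - a), p)) (Ioo a b))
  (hp : 0 < p) (hab : a ≤ b) (hx₀ : 0 ≤ x₀) (hx₁ : x₀ + p * (b - a) ≤ 1)
include hγ hp hab hx₀ hx₁

theorem intervalIntegrable_comp_of_eqOn_line (hDc : ContinuousOn D box1) :
    IntervalIntegrable (fun s => D (γ s)) volume a b := by
  refine IntervalIntegrable.congr_uIoo ?_ (fun s hs => congrArg D (hγ ?_).symm)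
  · refine ContinuousOn.intervalIntegrable ?_
    rw [uIcc_of_le hab]
    exact hDc.comp (by fun_prop) (mapsTo_line_box1 hp.le hx₀ hx₁)
  · rwa [uIoo_of_le hab] at hs

theorem integral_comp_of_eqOn_line (hfc : ContinuousOn f box1) (hDc : ContinuousOn D box1)
    (hD : ∀ y ∈ Ioo (0:ℝ) 1, ∀ p, 0 < p → HasDerivAt (fun z => f (z, p)) (D (y, p) / p) y) :
    ∫ s in a..b, D (γ s) = f (x₀ + p * (b - a), p) - f (x₀, p) := by
  have hint := intervalIntegrable_comp_of_eqOn_line (eqOn_refl _ _) hp hab hx₀ hx₁ hDc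
  rw [intervalIntegral.integral_congr_uIoo
      (fun s hs => congrArg D (hγ (by rwa [uIoo_of_le hab] at hs))),
    intervalIntegral.integral_eq_sub_of_hasDerivAt_of_le hab
      (hfc.comp (by fun_prop) (mapsTo_line_box1 hp.le hx₀ hx₁)) (fun s hs => ?_) hint]
  · simp
  · have hy : x₀ + p * (s - a) ∈ Ioo (0:ℝ) 1 := ⟨by nlinarith [hs.1], by nlinarith [hs.2]⟩
    have hline : HasDerivAt (fun s => x₀ + p * (s - a)) p s := by
      simpa using ((hasDerivAt_id s).sub_const a).const_mul p |>.const_add x₀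
    have := (hD _ hy p hp).comp s hline
    rwa [div_mul_cancel₀ _ hp.ne'] at this

end LineIntegral

section FlowIntegral

variable {f D : ℝ × ℝ → ℝ} {τ : ℕ → ℝ} {q p c : ℝ}

theorem flow_eqOn_initial (hp : 0 ≤ p) :
    EqOn (fun s => Fmap q p s τ) (fun s => (q + p * (s - 0), p)) (Ioo 0 (T0 q p)) := by
  intro s hs
  rcases hp.lt_or_eq with hp | rfl
  · have : p * s < 1 - q := by
      have := hs.2
      rw [T0, lt_div_iff₀ hp] at this
      linarith
    simp [Fmap_of_lt this]
  · simp [T0] at hs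

variable (hDc : ContinuousOn D box1) (hx : (q, p) ∈ box1) (hcol : 0 < p ∨ q = 1)
include hDc hx hcol

theorem intervalIntegrable_flow_initial :
    IntervalIntegrable (fun s => D (Fmap q p s τ)) volume 0 (T0 q p) := by
  rcases hcol with hp | rfl
  · exact intervalIntegrable_comp_of_eqOn_line (flow_eqOn_initial hx.2) hp
      (T0_nonneg hx.1.2 hx.2) hx.1.1 (by rw [sub_zero, add_mul_T0 (Or.inl hp)]) hDc
  · simp [T0]

theorem integral_flow_initial (hfc : ContinuousOn f box1)
    (hD : ∀ y ∈ Ioo (0:ℝ) 1, ∀ p, 0 < p → HasDerivAt (fun z => f (z, p)) (D (y, p) / p) y) :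
    ∫ s in (0:ℝ)..T0 q p, D (Fmap q p s τ) = f (1, p) - f (q, p) := by
  rcases hcol with hp | rfl
  · rw [integral_comp_of_eqOn_line (flow_eqOn_initial hx.2) hp (T0_nonneg hx.1.2 hx.2) hx.1.1
      (by rw [sub_zero, add_mul_T0 (Or.inl hp)]) hfc hDc hD, sub_zero, add_mul_T0 (Or.inl hp)]
  · simp [T0]

variable (hpos : ∀ n, 0 < τ n) (hS : Tendsto (Sn τ) atTop atTop)
include hpos hS

theorem intervalIntegrable_flow_segment (k : ℕ) {b : ℝ}
    (hb : b ∈ Icc (Tn q p τ k) (Tn q p τ (k + 1))) :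
    IntervalIntegrable (fun s => D (Fmap q p s τ)) volume (Tn q p τ k) b := by
  have hτ := hpos (k + 1)
  refine intervalIntegrable_comp_of_eqOn_line
    ((flow_eqOn_segment hpos hS hx hcol k).mono (Ioo_subset_Ioo_right hb.2)) (inv_pos.2 hτ) hb.1
    le_rfl ?_ hDc
  have := hb.2
  rw [Tn_succ] at this
  rw [zero_add, inv_mul_le_iff₀ hτ]
  linarith

theorem intervalIntegrable_flow_Tn (k : ℕ) :
    IntervalIntegrable (fun s => D (Fmap q p s τ)) volume 0 (Tn q p τ k) := by
  induction k with
  | zero => rw [Tn_zero]; exact intervalIntegrable_flow_initial hDc hx hcol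
  | succ k ih =>
    refine ih.trans (intervalIntegrable_flow_segment hDc hx hcol hpos hS k ⟨?_, le_rfl⟩)
    rw [Tn_succ]; linarith [hpos (k + 1)]

variable (hfc : ContinuousOn f box1)
  (hD : ∀ y ∈ Ioo (0:ℝ) 1, ∀ p, 0 < p → HasDerivAt (fun z => f (z, p)) (D (y, p) / p) y)
include hfc hD

theorem integral_flow_segment (k : ℕ) {b : ℝ} (hb : b ∈ Icc (Tn q p τ k) (Tn q p τ (k + 1))) :
    ∫ s in Tn q p τ k..b, D (Fmap q p s τ) =
      f ((τ (k + 1))⁻¹ * (b - Tn q p τ k), (τ (k + 1))⁻¹) - f (0, (τ (k + 1))⁻¹) := by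
  have hτ := hpos (k + 1)
  have hb₂ := hb.2
  rw [Tn_succ] at hb₂
  rw [integral_comp_of_eqOn_line
    ((flow_eqOn_segment hpos hS hx hcol k).mono (Ioo_subset_Ioo_right hb.2)) (inv_pos.2 hτ) hb.1
    le_rfl (by rw [zero_add, inv_mul_le_iff₀ hτ]; linarith) hfc hDc hD, zero_add]

theorem integral_flow_Tn (hbdy : ∀ p', 0 ≤ p' → f (1, p') = c) (k : ℕ) :
    ∫ s in (0:ℝ)..Tn q p τ k, D (Fmap q p s τ) =
      c - f (q, p) - ∑ j ∈ Finset.range k, (f (0, (τ (j + 1))⁻¹) - c) := by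
  induction k with
  | zero =>
    rw [Tn_zero, integral_flow_initial hDc hx hcol hfc hD, hbdy p hx.2]
    simp
  | succ k ih =>
    have hle : Tn q p τ k ≤ Tn q p τ (k + 1) := by rw [Tn_succ]; linarith [hpos (k + 1)]
    rw [← intervalIntegral.integral_add_adjacent_intervals
        (intervalIntegrable_flow_Tn hDc hx hcol hpos hS k)
        (intervalIntegrable_flow_segment hDc hx hcol hpos hS k ⟨hle, le_rfl⟩),
      ih, integral_flow_segment hDc hx hcol hpos hS hfc hD k ⟨hle, le_rfl⟩, Finset.sum_range_succ]
    have hone : (τ (k + 1))⁻¹ * (Tn q p τ (k + 1) - Tn q p τ k) = 1 := by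
      rw [Tn_succ, add_sub_cancel_left, inv_mul_cancel₀ (hpos (k + 1)).ne']
    rw [hone, hbdy _ (inv_nonneg.2 (hpos (k + 1)).le)]
    ring

theorem integral_flow_of_T0_le (hbdy : ∀ p', 0 ≤ p' → f (1, p') = c) {t : ℝ}
    (ht : T0 q p ≤ t) :
    ∫ s in (0:ℝ)..t, D (Fmap q p s τ) = f (Fmap q p t τ) - f (q, p) -
      ∑ k ∈ Finset.range (Nt τ (t - T0 q p) + 1), (f (0, (τ (k + 1))⁻¹) - c) := by
  set N := Nt τ (t - T0 q p)
  have hmem := mem_Ico_Tn_Nt hS ht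
  rw [← intervalIntegral.integral_add_adjacent_intervals
      (intervalIntegrable_flow_Tn hDc hx hcol hpos hS N)
      (intervalIntegrable_flow_segment hDc hx hcol hpos hS N ⟨hmem.1, hmem.2.le⟩),
    integral_flow_Tn hDc hx hcol hpos hS hfc hD hbdy N,
    integral_flow_segment hDc hx hcol hpos hS hfc hD N ⟨hmem.1, hmem.2.le⟩,
    Fmap_eq_of_mem_Ico hpos hS hx.2 hcol N hmem, Finset.sum_range_succ]
  ring

end FlowIntegral

theorem tauOf_pos {Ω : Type*} {w : ℕ → Ω → ℝ} (hw : ∀ i ω, 0 < w i ω) (ω : Ω) (n : ℕ) :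
    0 < tauOf w ω n :=
  inv_pos.2 (hw n ω)

section Speeds

variable {Ω : Type*} [MeasurableSpace Ω] {Pr : Measure Ω} {φ : Measure ℝ} {v w : ℕ → Ω → ℝ}

theorem IsIIDSpeeds.congr (hv : IsIIDSpeeds Pr v φ) (h : ∀ i, v i =ᵐ[Pr] w i)
    (hw : ∀ i ω, 0 < w i ω) : IsIIDSpeeds Pr w φ :=
  ⟨(iIndepFun_congr h).1 hv.1, fun i => (Measure.map_congr (h i)).symm.trans (hv.2.1 i), hw⟩

theorem measurable_Sn_tauOf (hwm : ∀ i, Measurable (w i)) (n : ℕ) :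
    Measurable fun ω => Sn (tauOf w ω) n :=
  Finset.measurable_sum _ fun i _ => (hwm (i + 1)).inv

theorem integrable_exp_neg_of_nonneg {X : Ω → ℝ} [IsFiniteMeasure Pr] (hX : Measurable X)
    (h : ∀ ω, 0 ≤ X ω) : Integrable (fun ω => Real.exp (-1 * X ω)) Pr :=
  .of_mem_Icc 0 1 (by fun_prop) (.of_forall fun ω =>
    ⟨(Real.exp_pos _).le, Real.exp_le_one_iff.2 (by linarith [h ω])⟩)

variable (hwm : ∀ i, Measurable (w i)) (hw : IsIIDSpeeds Pr w φ)
include hwm hw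

theorem identDistrib_tauOf (i j : ℕ) :
    IdentDistrib (fun ω => tauOf w ω i) (fun ω => tauOf w ω j) Pr Pr :=
  (IdentDistrib.mk (hwm i).aemeasurable (hwm j).aemeasurable
    ((hw.2.1 i).trans (hw.2.1 j).symm)).comp measurable_inv

theorem mgf_Sn_tauOf (n : ℕ) (t : ℝ) :
    mgf (fun ω => Sn (tauOf w ω) n) Pr t = mgf (fun ω => tauOf w ω 1) Pr t ^ n := by
  have hind : iIndepFun (fun i ω => tauOf w ω (i + 1)) Pr :=
    (hw.1.comp (fun _ x => x⁻¹) fun _ => measurable_inv).precomp Nat.succ_injective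
  have hsum : (fun ω => Sn (tauOf w ω) n) = ∑ i ∈ Finset.range n, fun ω => tauOf w ω (i + 1) := by
    ext ω; simp [Sn, Finset.sum_apply]
  rw [hsum, hind.mgf_sum (fun i => (hwm (i + 1)).inv),
    Finset.prod_eq_pow_card fun i _ => mgf_congr_of_identDistrib _ _
      (identDistrib_tauOf hwm hw (i + 1) 1) t, Finset.card_range]

theorem mgf_tauOf_lt_one [IsProbabilityMeasure Pr] : mgf (fun ω => tauOf w ω 1) Pr (-1) < 1 := by
  have hτ : ∀ ω, -1 * tauOf w ω 1 < 0 := fun ω => by linarith [tauOf_pos hw.2.2 ω 1]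
  have hint := integrable_exp_neg_of_nonneg (Pr := Pr) (X := fun ω => tauOf w ω 1) (hwm 1).inv
    fun ω => by linarith [hτ ω]
  have hsupp : Function.support (fun ω => 1 - Real.exp (-1 * tauOf w ω 1)) = univ :=
    eq_univ_of_forall fun ω => sub_ne_zero.2 (Real.exp_lt_one_iff.2 (hτ ω)).ne'
  have := (integral_pos_iff_support_of_nonneg
    (fun ω => sub_nonneg.2 (Real.exp_le_one_iff.2 (hτ ω).le))
    ((integrable_const 1).sub hint)).2 (by rw [hsupp]; simp)
  rw [integral_sub (integrable_const 1) hint] at this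
  rw [mgf]
  simpa using this

theorem measureReal_Sn_le_le [IsProbabilityMeasure Pr] (n : ℕ) (u : ℝ) :
    Pr.real {ω | Sn (tauOf w ω) n ≤ u} ≤
      Real.exp u * mgf (fun ω => tauOf w ω 1) Pr (-1) ^ n := by
  have := measure_le_le_exp_mul_mgf u (by norm_num : (-1:ℝ) ≤ 0)
    (integrable_exp_neg_of_nonneg (Pr := Pr) (measurable_Sn_tauOf hwm n)
      fun ω => Sn_nonneg (tauOf_pos hw.2.2 ω) n)
  rwa [mgf_Sn_tauOf hwm hw, neg_neg, one_mul] at this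

theorem tsum_measure_Sn_le_ne_top [IsProbabilityMeasure Pr] (u : ℝ) :
    ∑' n, Pr {ω | Sn (tauOf w ω) n ≤ u} ≠ ∞ := by
  set r := mgf (fun ω => tauOf w ω 1) Pr (-1)
  have hle : ∀ n, Pr {ω | Sn (tauOf w ω) n ≤ u} ≤
      ENNReal.ofReal (Real.exp u) * ENNReal.ofReal r ^ n := fun n => by
    rw [← ofReal_measureReal, ← ENNReal.ofReal_pow mgf_nonneg,
      ← ENNReal.ofReal_mul (Real.exp_pos u).le]
    exact ENNReal.ofReal_le_ofReal (measureReal_Sn_le_le hwm hw n u)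
  refine ne_top_of_le_ne_top ?_ (ENNReal.tsum_le_tsum hle)
  rw [ENNReal.tsum_mul_left, ENNReal.tsum_geometric]
  exact ENNReal.mul_ne_top ENNReal.ofReal_ne_top (ENNReal.inv_ne_top.2
    (tsub_pos_iff_lt.2 (ENNReal.ofReal_lt_one.2 (mgf_tauOf_lt_one hwm hw))).ne')

theorem ae_tendsto_Sn [IsProbabilityMeasure Pr] :
    ∀ᵐ ω ∂Pr, Tendsto (Sn (tauOf w ω)) atTop atTop := by
  filter_upwards [ae_all_iff.2 fun k : ℕ =>
    ae_eventually_notMem (tsum_measure_Sn_le_ne_top hwm hw k)] with ω hω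
  refine tendsto_atTop.2 fun b => ?_
  obtain ⟨k, hk⟩ := exists_nat_ge b
  filter_upwards [hω k] with n hn
  exact hk.trans (not_le.1 hn).le

end Speeds

section Versions

variable {Ω : Type*} [MeasurableSpace Ω] {Pr : Measure Ω} {φ : Measure ℝ} {v w : ℕ → Ω → ℝ}

theorem IsIIDSpeeds.exists_measurable_version [IsProbabilityMeasure φ] (hv : IsIIDSpeeds Pr v φ) :
    ∃ w : ℕ → Ω → ℝ, (∀ i, Measurable (w i)) ∧ IsIIDSpeeds Pr w φ ∧ ∀ i, v i =ᵐ[Pr] w i := by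
  have hae : ∀ i, AEMeasurable (v i) Pr := fun i => by
    by_contra h
    exact IsProbabilityMeasure.ne_zero φ ((hv.2.1 i).symm.trans (Measure.map_of_not_aemeasurable h))
  let w i ω := if 0 < (hae i).mk _ ω then (hae i).mk _ ω else 1
  have hvw : ∀ i, v i =ᵐ[Pr] w i := fun i => by
    filter_upwards [(hae i).ae_eq_mk] with ω hω
    simp [w, ← hω, hv.2.2 i ω]
  refine ⟨w, fun i => Measurable.ite (measurableSet_lt measurable_const (hae i).measurable_mk)
    (hae i).measurable_mk measurable_const, hv.congr hvw fun i ω => ?_, hvw⟩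
  dsimp only [w]
  split_ifs with h
  exacts [h, one_pos]

-- Redefining the speeds on a null set so that `S_n → ∞` for every `ω` makes `Nt`, hence the
-- flow, jointly measurable in `(t, ω)`.
theorem IsIIDSpeeds.exists_version_tendsto_Sn [IsProbabilityMeasure Pr] [IsProbabilityMeasure φ]
    (hv : IsIIDSpeeds Pr v φ) :
    ∃ w : ℕ → Ω → ℝ, (∀ i, Measurable (w i)) ∧ IsIIDSpeeds Pr w φ ∧
      (∀ ω, Tendsto (Sn (tauOf w ω)) atTop atTop) ∧ ∀ i, v i =ᵐ[Pr] w i := by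
  classical
  obtain ⟨w₀, hm, hw₀, hvw₀⟩ := hv.exists_measurable_version
  set B := toMeasurable Pr {ω | ¬ Tendsto (Sn (tauOf w₀ ω)) atTop atTop}
  have hB : Pr B = 0 := by rw [measure_toMeasurable]; exact ae_iff.1 (ae_tendsto_Sn hm hw₀)
  let w i ω := if ω ∈ B then 1 else w₀ i ω
  have hw₀w : ∀ i, w₀ i =ᵐ[Pr] w i := fun i => by
    filter_upwards [measure_eq_zero_iff_ae_notMem.1 hB] with ω hω
    simp [w, hω]
  refine ⟨w, fun i => Measurable.ite (measurableSet_toMeasurable _ _) measurable_const (hm i),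
    hw₀.congr hw₀w fun i ω => ?_, fun ω => ?_, fun i => (hvw₀ i).trans (hw₀w i)⟩
  · dsimp only [w]
    split_ifs
    exacts [one_pos, hw₀.2.2 i ω]
  · by_cases hω : ω ∈ B
    · have : Sn (tauOf w ω) = fun n : ℕ => (n : ℝ) := by funext n; simp [Sn, tauOf, w, hω]
      rw [this]
      exact tendsto_natCast_atTop_atTop
    · have : tauOf w ω = tauOf w₀ ω := by funext n; simp [tauOf, w, hω]
      rw [this]
      by_contra h
      exact hω (subset_toMeasurable _ _ h)

end Versions

section JointMeasurability

variable {Ω : Type*} [MeasurableSpace Ω] {Pr : Measure Ω} {φ : Measure ℝ} {w : ℕ → Ω → ℝ}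
  (hwm : ∀ i, Measurable (w i)) (hw : IsIIDSpeeds Pr w φ)
  (hS : ∀ ω, Tendsto (Sn (tauOf w ω)) atTop atTop)
include hwm hw hS

theorem measurable_Nt_tauOf : Measurable fun z : ℝ × Ω => Nt (tauOf w z.2) z.1 := by
  refine measurable_to_countable' fun n => ?_
  have hSn : ∀ k, Measurable fun z : ℝ × Ω => Sn (tauOf w z.2) k :=
    fun k => (measurable_Sn_tauOf hwm k).comp measurable_snd
  have : (fun z : ℝ × Ω => Nt (tauOf w z.2) z.1) ⁻¹' {n} =
      ({_z | n = 0} ∪ {z | Sn (tauOf w z.2) n ≤ z.1}) ∩ {z | z.1 < Sn (tauOf w z.2) (n + 1)} := by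
    ext z
    exact Nt_eq_iff (tauOf_pos hw.2.2 z.2) (hS z.2) z.1 n
  rw [this]
  exact ((MeasurableSet.const _).union (measurableSet_le (hSn n) measurable_fst)).inter
    (measurableSet_lt measurable_fst (hSn (n + 1)))

theorem measurable_Fmap_tauOf (q p : ℝ) :
    Measurable fun z : ℝ × Ω => Fmap q p z.1 (tauOf w z.2) := by
  have hg : Measurable fun y : (ℝ × Ω) × ℕ =>
      ((y.1.1 - Sn (tauOf w y.1.2) y.2) / tauOf w y.1.2 (y.2 + 1), (tauOf w y.1.2 (y.2 + 1))⁻¹) :=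
    measurable_from_prod_countable_left fun n =>
      have hτ : Measurable fun z : ℝ × Ω => tauOf w z.2 (n + 1) :=
        ((hwm (n + 1)).comp measurable_snd).inv
      ((measurable_fst.sub ((measurable_Sn_tauOf hwm n).comp measurable_snd)).div hτ).prodMk hτ.inv
  have htraj : Measurable fun z : ℝ × Ω => trajU (tauOf w z.2) z.1 :=
    hg.comp (measurable_id.prodMk (measurable_Nt_tauOf hwm hw hS))
  exact Measurable.ite (measurableSet_lt (by fun_prop) measurable_const) (by fun_prop)
    (htraj.comp ((measurable_fst.sub_const _).prodMk measurable_snd))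

end JointMeasurability

section Wald

variable {Ω : Type*} [MeasurableSpace Ω] {Pr : Measure Ω} {φ : Measure ℝ} {w : ℕ → Ω → ℝ}
  (hwm : ∀ i, Measurable (w i)) (hw : IsIIDSpeeds Pr w φ)
include hwm hw

theorem indepFun_Sn_tauOf_succ (k : ℕ) :
    IndepFun (fun ω => Sn (tauOf w ω) k) (fun ω => tauOf w ω (k + 1)) Pr := by
  have hind : iIndepFun (fun i ω => tauOf w ω i) Pr :=
    hw.1.comp (fun _ x => x⁻¹) fun _ => measurable_inv
  have := hind.indepFun_finsetSum_of_notMem (fun i => (hwm i).inv)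
    (s := (Finset.range k).image (· + 1)) (i := k + 1) (by simp)
  convert this using 1
  ext ω
  rw [Finset.sum_apply, Finset.sum_image (by simp), Sn]

theorem integral_indicator_Sn_le_eq_zero {h : ℝ → ℝ} (hh : Measurable h)
    (hh₀ : ∫ y, h y ∂φ = 0) (k : ℕ) (u : ℝ) :
    ∫ ω, {ω | Sn (tauOf w ω) k ≤ u}.indicator (fun ω => h (w (k + 1) ω)) ω ∂Pr = 0 := by
  have hprod := (indepFun_Sn_tauOf_succ hwm hw k).integral_comp_mul_comp
    (f := (Iic u).indicator 1) (g := fun x => h x⁻¹) (measurable_Sn_tauOf hwm k).aemeasurable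
    (hwm (k + 1)).inv.aemeasurable
    ((measurable_one.indicator measurableSet_Iic).aestronglyMeasurable)
    (hh.comp measurable_inv).aestronglyMeasurable
  have hlaw : ∫ ω, h (w (k + 1) ω) ∂Pr = 0 := by
    rw [← hh₀, ← hw.2.1 (k + 1), integral_map (hwm (k + 1)).aemeasurable hh.aestronglyMeasurable]
  convert hprod using 1
  · congr 1
    ext ω
    by_cases hω : Sn (tauOf w ω) k ≤ u <;> simp [hω, tauOf]
  · simp [tauOf, hlaw]

-- Wald's identity: `{S_k ≤ u}` is independent of `v_{k+1}`, and the Chernoff bound makes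
-- `∑ P(S_k ≤ u)` finite, so sum and expectation can be exchanged.
theorem integral_sum_range_Nt_succ_eq_zero (hS : ∀ ω, Tendsto (Sn (tauOf w ω)) atTop atTop)
    [IsProbabilityMeasure Pr] {h : ℝ → ℝ} (hh : Measurable h) {C : ℝ} (hC : ∀ y, |h y| ≤ C)
    (hh₀ : ∫ y, h y ∂φ = 0) {u : ℝ} (hu : 0 ≤ u) :
    ∫ ω, ∑ k ∈ Finset.range (Nt (tauOf w ω) u + 1), h (w (k + 1) ω) ∂Pr = 0 := by
  set A : ℕ → Set Ω := fun k => {ω | Sn (tauOf w ω) k ≤ u}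
  have hA : ∀ k, MeasurableSet (A k) := fun k =>
    measurableSet_le (measurable_Sn_tauOf hwm k) measurable_const
  have hsum : ∀ ω, ∑ k ∈ Finset.range (Nt (tauOf w ω) u + 1), h (w (k + 1) ω) =
      ∑' k, (A k).indicator (fun ω => h (w (k + 1) ω)) ω := fun ω => by
    have hAk : ∀ k, ω ∈ A k ↔ k < Nt (tauOf w ω) u + 1 := fun k =>
      (Sn_le_iff_le_Nt (tauOf_pos hw.2.2 ω) (hS ω) hu k).trans Nat.lt_succ_iff.symm
    rw [tsum_eq_sum (s := Finset.range (Nt (tauOf w ω) u + 1)) fun k hk => by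
      simp [indicator_of_notMem (mt (hAk k).1 (by simpa using hk))]]
    exact Finset.sum_congr rfl fun k hk =>
      (indicator_of_mem ((hAk k).2 (Finset.mem_range.1 hk)) (fun ω => h (w (k + 1) ω))).symm
  have hbound : ∀ k, ∫⁻ ω, ‖(A k).indicator (fun ω => h (w (k + 1) ω)) ω‖ₑ ∂Pr ≤
      ENNReal.ofReal C * Pr (A k) := fun k => by
    rw [← lintegral_indicator_const (hA k)]
    refine lintegral_mono fun ω => ?_
    rw [enorm_indicator_eq_indicator_enorm]
    exact indicator_le_indicator (by
      rw [Real.enorm_eq_ofReal_abs]; exact ENNReal.ofReal_le_ofReal (hC _))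
  have hfin : ∑' k, ∫⁻ ω, ‖(A k).indicator (fun ω => h (w (k + 1) ω)) ω‖ₑ ∂Pr ≠ ∞ := by
    refine ne_top_of_le_ne_top ?_ (ENNReal.tsum_le_tsum hbound)
    rw [ENNReal.tsum_mul_left]
    exact ENNReal.mul_ne_top ENNReal.ofReal_ne_top (tsum_measure_Sn_le_ne_top hwm hw u)
  rw [integral_congr_ae (.of_forall hsum), integral_tsum
    (fun k => (Measurable.indicator (f := fun ω => h (w (k + 1) ω)) (hh.comp (hwm (k + 1)))
      (hA k)).aestronglyMeasurable) hfin]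
  simp [A, integral_indicator_Sn_le_eq_zero hwm hw hh hh₀]

end Wald

-- Composing with this retraction extends a function continuous on `box1` to a continuous
-- function on `ℝ × ℝ`; this is how measurability is obtained below.
def projBox1 (y : ℝ × ℝ) : ℝ × ℝ := (max 0 (min y.1 1), max 0 y.2)

theorem projBox1_mem (y : ℝ × ℝ) : projBox1 y ∈ box1 :=
  ⟨⟨le_max_left _ _, max_le zero_le_one (min_le_right _ _)⟩, mem_Ici.2 (le_max_left _ _)⟩

theorem projBox1_of_mem {y : ℝ × ℝ} (hy : y ∈ box1) : projBox1 y = y := by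
  obtain ⟨⟨h₀, h₁⟩, h₂ : 0 ≤ y.2⟩ := hy
  simp [projBox1, h₀, h₁, h₂]

theorem continuous_comp_projBox1 {f : ℝ × ℝ → ℝ} (hf : ContinuousOn f box1) :
    Continuous fun y => f (projBox1 y) :=
  hf.comp_continuous (by unfold projBox1; fun_prop) projBox1_mem

section Semigroup

variable {Ω : Type*} [MeasurableSpace Ω] {Pr : Measure Ω} {v w : ℕ → Ω → ℝ}
  {f : ℝ × ℝ → ℝ} {q p t : ℝ}

theorem Pop_congr (h : ∀ i, v i =ᵐ[Pr] w i) : Pop Pr v = Pop Pr w := by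
  ext f t x
  refine integral_congr_ae ?_
  filter_upwards [ae_all_iff.2 h] with ω hω
  rw [show tauOf v ω = tauOf w ω from funext fun n => by simp [tauOf, hω n]]

theorem Pop_of_lt [IsProbabilityMeasure Pr] (h : p * t < 1 - q) :
    Pop Pr w f t (q, p) = f (q + p * t, p) := by
  simp [Pop, Fmap_of_lt h]

variable (hw : ∀ i ω, 0 < w i ω) (hS : ∀ ω, Tendsto (Sn (tauOf w ω)) atTop atTop)
  {x : ℝ × ℝ} (hx : x ∈ box1) (ht : 0 ≤ t)
include hw hS hx ht

theorem Pop_comp_projBox1 : Pop Pr w (fun y => f (projBox1 y)) t x = Pop Pr w f t x :=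
  integral_congr_ae (.of_forall fun ω =>
    congrArg f (projBox1_of_mem (Fmap_mem_box1 (tauOf_pos hw ω) (hS ω) hx ht)))

theorem abs_Pop_le [IsProbabilityMeasure Pr] {C : ℝ} (hf : ∀ y ∈ box1, |f y| ≤ C) :
    |Pop Pr w f t x| ≤ C := by
  simpa [Pop] using norm_integral_le_of_norm_le_const (μ := Pr) (C := C)
    (f := fun ω => f (Fmap x.1 x.2 t (tauOf w ω))) (.of_forall fun ω => by
      simpa using hf _ (Fmap_mem_box1 (tauOf_pos hw ω) (hS ω) hx ht))

end Semigroup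

section Generator

variable {Ω : Type*} [MeasurableSpace Ω] {Pr : Measure Ω} {φ : Measure ℝ} {w : ℕ → Ω → ℝ}
  {f : ℝ × ℝ → ℝ} {q p t : ℝ}

theorem hasDerivAt_genForm_div
    (hdiff : ∀ x ∈ box1, 0 < x.2 → DifferentiableWithinAt ℝ (fun q => f (q, x.2)) (Icc 0 1) x.1) :
    ∀ y ∈ Ioo (0:ℝ) 1, ∀ p, 0 < p → HasDerivAt (fun z => f (z, p)) (genForm f (y, p) / p) y := by
  intro y hy p hp
  have hnhds : Icc (0:ℝ) 1 ∈ 𝓝 y := Icc_mem_nhds hy.1 hy.2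
  rw [genForm, mul_div_cancel_left₀ _ hp.ne', derivWithin_of_mem_nhds hnhds]
  exact ((hdiff (y, p) ⟨⟨hy.1.le, hy.2.le⟩, hp.le⟩ hp).differentiableAt hnhds).hasDerivAt

theorem ae_nonneg_of_isIIDSpeeds (hwm : ∀ i, Measurable (w i)) (hw : IsIIDSpeeds Pr w φ) :
    ∀ᵐ y ∂φ, 0 ≤ y := by
  rw [← hw.2.1 1]
  exact (ae_map_iff (hwm 1).aemeasurable measurableSet_Ici).2 (.of_forall fun ω => (hw.2.2 1 ω).le)

theorem integral_projBox1_zero (hwm : ∀ i, Measurable (w i)) (hw : IsIIDSpeeds Pr w φ) :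
    ∫ y, f (projBox1 (0, y)) ∂φ = ∫ y, f (0, y) ∂φ :=
  integral_congr_ae ((ae_nonneg_of_isIIDSpeeds hwm hw).mono fun _ hy =>
    congrArg f (projBox1_of_mem ⟨⟨le_rfl, zero_le_one⟩, hy⟩))

theorem integral_comp_speed (hwm : ∀ i, Measurable (w i)) (hw : IsIIDSpeeds Pr w φ)
    (hfc : ContinuousOn f box1) : ∫ ω, f (0, w 1 ω) ∂Pr = ∫ y, f (0, y) ∂φ := by
  rw [← integral_projBox1_zero hwm hw, ← hw.2.1 1, integral_map (f := fun y => f (projBox1 (0, y)))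
    (hwm 1).aemeasurable ((continuous_comp_projBox1 hfc).comp
      (by fun_prop : Continuous fun y : ℝ => ((0:ℝ), y))).aestronglyMeasurable]
  exact integral_congr_ae (.of_forall fun ω =>
    congrArg f (projBox1_of_mem ⟨⟨le_rfl, zero_le_one⟩, mem_Ici.2 (hw.2.2 1 ω).le⟩).symm)

theorem Pop_eq_add_integral_of_lt [IsProbabilityMeasure Pr] (hfc : ContinuousOn f box1)
    (hgc : ContinuousOn (genForm f) box1)
    (hdiff : ∀ x ∈ box1, 0 < x.2 → DifferentiableWithinAt ℝ (fun q => f (q, x.2)) (Icc 0 1) x.1)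
    (hx : (q, p) ∈ box1) (ht : 0 ≤ t) (h : p * t < 1 - q) :
    Pop Pr w f t (q, p) = f (q, p) + ∫ s in (0:ℝ)..t, Pop Pr w (genForm f) s (q, p) := by
  have hPop : ∀ s ∈ uIcc 0 t, Pop Pr w (genForm f) s (q, p) = genForm f (q + p * (s - 0), p) := by
    intro s hs
    rw [uIcc_of_le ht] at hs
    rw [sub_zero, Pop_of_lt (by nlinarith [hs.2, show (0:ℝ) ≤ p from hx.2])]
  rw [Pop_of_lt h, intervalIntegral.integral_congr hPop]
  rcases (show (0:ℝ) ≤ p from hx.2).lt_or_eq with hp | rfl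
  · rw [integral_comp_of_eqOn_line (eqOn_refl _ _) hp ht hx.1.1 (by linarith) hfc hgc
      (hasDerivAt_genForm_div hdiff), sub_zero]
    ring
  · simp [genForm]

end Generator

section Expectation

variable {Ω : Type*} [MeasurableSpace Ω] {Pr : Measure Ω} [IsProbabilityMeasure Pr]
  {φ : Measure ℝ} {w : ℕ → Ω → ℝ} {f g : ℝ × ℝ → ℝ} {q p t : ℝ}
  (hwm : ∀ i, Measurable (w i)) (hw : IsIIDSpeeds Pr w φ)
  (hS : ∀ ω, Tendsto (Sn (tauOf w ω)) atTop atTop)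
include hwm hw hS

theorem integrable_comp_projBox1_Fmap (hgc : ContinuousOn g box1) {C : ℝ}
    (hgb : ∀ x ∈ box1, |g x| ≤ C) (μ : Measure ℝ) [IsFiniteMeasure μ] :
    Integrable (Function.uncurry fun s ω => g (projBox1 (Fmap q p s (tauOf w ω)))) (μ.prod Pr) :=
  .of_bound ((continuous_comp_projBox1 hgc).measurable.comp
      (measurable_Fmap_tauOf hwm hw hS q p)).aestronglyMeasurable C
    (.of_forall fun _ => (Real.norm_eq_abs _).trans_le (hgb _ (projBox1_mem _)))

theorem intervalIntegral_Pop_eq_integral (hgc : ContinuousOn g box1) {C : ℝ}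
    (hgb : ∀ x ∈ box1, |g x| ≤ C) (hx : (q, p) ∈ box1) (ht : 0 ≤ t) :
    ∫ s in (0:ℝ)..t, Pop Pr w g s (q, p) =
      ∫ ω, (∫ s in (0:ℝ)..t, g (projBox1 (Fmap q p s (tauOf w ω)))) ∂Pr := by
  rw [← intervalIntegral_integral_swap (by
    rw [uIoc_of_le ht]; exact integrable_comp_projBox1_Fmap hwm hw hS hgc hgb _)]
  refine intervalIntegral.integral_congr fun s hs => ?_
  rw [uIcc_of_le ht] at hs
  exact (Pop_comp_projBox1 hw.2.2 hS hx hs.1).symm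

theorem integrable_intervalIntegral_comp_Fmap (hgc : ContinuousOn g box1) {C : ℝ}
    (hgb : ∀ x ∈ box1, |g x| ≤ C) (ht : 0 ≤ t) :
    Integrable (fun ω => ∫ s in (0:ℝ)..t, g (projBox1 (Fmap q p s (tauOf w ω)))) Pr := by
  simpa only [intervalIntegral.integral_of_le ht, Function.uncurry_apply_pair]
    using (integrable_comp_projBox1_Fmap hwm hw hS hgc hgb (volume.restrict (Ioc 0 t))
      ).integral_prod_right

theorem integral_sum_jumps_eq_zero (hfc : ContinuousOn f box1) {B : ℝ}
    (hfb : ∀ x ∈ box1, |f x| ≤ B) {u : ℝ} (hu : 0 ≤ u) :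
    ∫ ω, ∑ k ∈ Finset.range (Nt (tauOf w ω) u + 1),
      (f (projBox1 (0, w (k + 1) ω)) - ∫ y, f (0, y) ∂φ) ∂Pr = 0 := by
  have : IsProbabilityMeasure φ := hw.2.1 1 ▸ Measure.isProbabilityMeasure_map (hwm 1).aemeasurable
  have hfB : Continuous fun y : ℝ => f (projBox1 (0, y)) :=
    (continuous_comp_projBox1 hfc).comp (by fun_prop)
  refine integral_sum_range_Nt_succ_eq_zero hwm hw hS (h := fun y => f (projBox1 (0, y)) - _)
    (hfB.measurable.sub_const _) (C := B + |∫ y, f (0, y) ∂φ|)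
    (fun y => (abs_sub _ _).trans (by gcongr; exact hfb _ (projBox1_mem _))) ?_ hu
  rw [integral_sub (.of_bound hfB.aestronglyMeasurable B
    (.of_forall fun y => hfb _ (projBox1_mem _))) (integrable_const _), integral_const,
    integral_projBox1_zero hwm hw]
  simp

end Expectation

theorem integral_genForm_flow {Ω : Type*} {w : ℕ → Ω → ℝ} {f : ℝ × ℝ → ℝ} {q p t c : ℝ}
    (hw : ∀ i ω, 0 < w i ω)
    (hS : ∀ ω, Tendsto (Sn (tauOf w ω)) atTop atTop) (hfc : ContinuousOn f box1)
    (hgc : ContinuousOn (genForm f) box1)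
    (hdiff : ∀ x ∈ box1, 0 < x.2 → DifferentiableWithinAt ℝ (fun q => f (q, x.2)) (Icc 0 1) x.1)
    (hbdy : ∀ p, 0 ≤ p → f (1, p) = c) (hx : (q, p) ∈ box1) (hcol : 0 < p ∨ q = 1)
    (hT0 : T0 q p ≤ t) (ω : Ω) :
    ∫ s in (0:ℝ)..t, genForm f (projBox1 (Fmap q p s (tauOf w ω))) =
      f (projBox1 (Fmap q p t (tauOf w ω))) - f (q, p) -
        ∑ k ∈ Finset.range (Nt (tauOf w ω) (t - T0 q p) + 1),
          (f (projBox1 (0, w (k + 1) ω)) - c) := by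
  have hmem : ∀ s, 0 ≤ s → Fmap q p s (tauOf w ω) ∈ box1 := fun s hs =>
    Fmap_mem_box1 (tauOf_pos hw ω) (hS ω) hx hs
  have ht : 0 ≤ t := (T0_nonneg hx.1.2 hx.2).trans hT0
  rw [intervalIntegral.integral_congr fun s hs => congrArg (genForm f) (projBox1_of_mem (hmem s (by
      rw [uIcc_of_le ht] at hs; exact hs.1))),
    integral_flow_of_T0_le hgc hx hcol (tauOf_pos hw ω) (hS ω) hfc (hasDerivAt_genForm_div hdiff)
      hbdy hT0, projBox1_of_mem (hmem t ht)]
  simp only [tauOf, inv_inv,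
    projBox1_of_mem (⟨⟨le_rfl, zero_le_one⟩, (hw _ ω).le⟩ : (0, w _ ω) ∈ box1)]

section Generator

variable {Ω : Type*} [MeasurableSpace Ω] {Pr : Measure Ω} [IsProbabilityMeasure Pr]
  {φ : Measure ℝ} {w : ℕ → Ω → ℝ} {f : ℝ × ℝ → ℝ} {q p t : ℝ}

theorem Pop_eq_add_integral_of_not_lt (hwm : ∀ i, Measurable (w i)) (hw : IsIIDSpeeds Pr w φ)
    (hS : ∀ ω, Tendsto (Sn (tauOf w ω)) atTop atTop) (hfc : ContinuousOn f box1) {B : ℝ}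
    (hfb : ∀ x ∈ box1, |f x| ≤ B) (hgc : ContinuousOn (genForm f) box1) {Bg : ℝ}
    (hgb : ∀ x ∈ box1, |genForm f x| ≤ Bg)
    (hdiff : ∀ x ∈ box1, 0 < x.2 → DifferentiableWithinAt ℝ (fun q => f (q, x.2)) (Icc 0 1) x.1)
    (hbdy : ∀ p, 0 ≤ p → f (1, p) = ∫ y, f (0, y) ∂φ)
    (hx : (q, p) ∈ box1) (ht : 0 ≤ t) (h : ¬ p * t < 1 - q) :
    Pop Pr w f t (q, p) = f (q, p) + ∫ s in (0:ℝ)..t, Pop Pr w (genForm f) s (q, p) := by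
  obtain ⟨hcol, hT0⟩ := collided_of_not_lt hx.1.2 hx.2 ht h
  have hint : Integrable (fun ω => f (projBox1 (Fmap q p t (tauOf w ω)))) Pr :=
    .of_bound ((continuous_comp_projBox1 hfc).measurable.comp ((measurable_Fmap_tauOf hwm hw hS q p
      ).comp (measurable_const.prodMk measurable_id))).aestronglyMeasurable B
      (.of_forall fun ω => (Real.norm_eq_abs _).trans_le (hfb _ (projBox1_mem _)))
  have key : ∫ ω, (f (projBox1 (Fmap q p t (tauOf w ω))) - f (q, p) -
      ∫ s in (0:ℝ)..t, genForm f (projBox1 (Fmap q p s (tauOf w ω)))) ∂Pr = 0 := by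
    refine (integral_congr_ae (.of_forall fun ω => ?_)).trans
      (integral_sum_jumps_eq_zero hwm hw hS hfc hfb (sub_nonneg.2 hT0))
    dsimp only
    rw [integral_genForm_flow hw.2.2 hS hfc hgc hdiff hbdy hx hcol hT0]
    ring
  rw [integral_sub (f := fun ω => f (projBox1 (Fmap q p t (tauOf w ω))) - f (q, p))
      (hint.sub (integrable_const _))
      (integrable_intervalIntegral_comp_Fmap hwm hw hS hgc hgb ht),
    integral_sub hint (integrable_const _), integral_const] at key
  rw [← Pop_comp_projBox1 hw.2.2 hS hx ht, intervalIntegral_Pop_eq_integral hwm hw hS hgc hgb hx ht]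
  simp only [Pop, probReal_univ, one_smul] at key ⊢
  linarith

end Generator

theorem integral_map_inv (φ : Measure ℝ) (F : ℝ → ℝ) :
    ∫ τ, F τ⁻¹ ∂(Measure.map (fun u : ℝ => u⁻¹) φ) = ∫ y, F y ∂φ := by
  have he : MeasurableEmbedding (fun u : ℝ => u⁻¹) := (MeasurableEquiv.inv ℝ).measurableEmbedding
  simp [he.integral_map]

section Witness

variable {Ω : Type*} [MeasurableSpace Ω] {Pr : Measure Ω} [IsProbabilityMeasure Pr]
  {φ : Measure ℝ} {w : ℕ → Ω → ℝ} {f g : ℝ × ℝ → ℝ} {q p : ℝ}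

theorem IsGenWitness.slice_eq (hgw : IsGenWitness Pr w f g) (hp : 0 < p) {y : ℝ}
    (hy : y ∈ Ico (0:ℝ) 1) : f (y, p) = f (0, p) + p⁻¹ * ∫ u in (0:ℝ)..y, g (u, p) := by
  have ht : 0 ≤ y / p := div_nonneg hy.1 hp.le
  have hpy : p * (y / p) = y := mul_div_cancel₀ _ hp.ne'
  have hPop : ∀ s ∈ uIcc 0 (y / p), Pop Pr w g s (0, p) = g (p * s, p) := fun s hs => by
    rw [uIcc_of_le ht] at hs
    rw [Pop_of_lt (by nlinarith [hs.2, hy.2]), zero_add]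
  have := hgw.2.2 (y / p) ht (0, p) ⟨⟨le_rfl, zero_le_one⟩, hp.le⟩
  rwa [Pop_of_lt (by rw [hpy]; linarith [hy.2]), zero_add, hpy,
    intervalIntegral.integral_congr hPop,
    intervalIntegral.integral_comp_mul_left (fun u => g (u, p)) hp.ne', mul_zero, hpy,
    smul_eq_mul] at this

theorem IsGenWitness.hasDerivWithinAt (hgw : IsGenWitness Pr w f g) (hfc : ContinuousOn f box1)
    (hp : 0 < p) {y : ℝ} (hy : y ∈ Icc (0:ℝ) 1) :
    HasDerivWithinAt (fun z => f (z, p)) (p⁻¹ * g (y, p)) (Icc 0 1) y := by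
  set G : ℝ → ℝ := fun u => g (projBox1 (u, p))
  have hGg : ∀ z ∈ Icc (0:ℝ) 1, G z = g (z, p) := fun z hz =>
    congrArg g (projBox1_of_mem ⟨hz, hp.le⟩)
  set Φ : ℝ → ℝ := fun z => f (0, p) + p⁻¹ * ∫ u in (0:ℝ)..z, G u
  have hΦ : ∀ z, HasDerivAt Φ (p⁻¹ * G z) z := fun z =>
    ((((continuous_comp_projBox1 hgw.1).comp (by fun_prop)).integral_hasStrictDerivAt 0 z
      ).hasDerivAt.const_mul _).const_add _
  have hEq : EqOn (fun z => f (z, p)) Φ (Icc 0 1) := by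
    refine EqOn.of_subset_closure (s := Ico 0 1) (fun z hz => ?_)
      (hfc.comp (by fun_prop) fun z hz => ⟨hz, hp.le⟩)
      (continuous_iff_continuousAt.2 fun z => (hΦ z).continuousAt).continuousOn
      Ico_subset_Icc_self (by rw [closure_Ico zero_ne_one])
    rw [hgw.slice_eq hp hz]
    refine congrArg _ (congrArg _ (intervalIntegral.integral_congr fun u hu => (hGg u ?_).symm))
    rw [uIcc_of_le hz.1] at hu
    exact Icc_subset_Icc_right hz.2.le hu
  rw [← hGg y hy]
  exact (hΦ y).hasDerivWithinAt.congr (fun z hz => hEq hz) (hEq hy)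

theorem IsGenWitness.apply_zero_momentum (hgw : IsGenWitness Pr w f g) (hq : q ∈ Icc (0:ℝ) 1) :
    g (q, 0) = 0 := by
  have hlt : EqOn g 0 (Ico 0 1 ×ˢ {0}) := by
    rintro ⟨q, p⟩ ⟨hq, hp : p = 0⟩
    subst hp
    have hPop : ∀ (h : ℝ × ℝ → ℝ) s, Pop Pr w h s (q, 0) = h (q, 0) := fun h s => by
      rw [Pop_of_lt (by linarith [hq.2]), zero_mul, add_zero]
    have := hgw.2.2 1 zero_le_one (q, 0) ⟨⟨hq.1, hq.2.le⟩, mem_Ici.2 le_rfl⟩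
    simpa [hPop] using this
  refine hlt.of_subset_closure (hgw.1.mono fun x hx => ⟨hx.1, (mem_singleton_iff.1 hx.2).ge⟩)
    continuousOn_const (prod_mono Ico_subset_Icc_self subset_rfl) ?_ ⟨hq, rfl⟩
  rw [closure_prod_eq, closure_Ico zero_ne_one, closure_singleton]

theorem IsGenWitness.eqOn_genForm (hgw : IsGenWitness Pr w f g) (hfc : ContinuousOn f box1) :
    EqOn g (genForm f) box1 := by
  rintro ⟨q, p⟩ ⟨hq, hp : 0 ≤ p⟩
  rcases hp.lt_or_eq with hp | rfl
  · rw [genForm, ((hgw.hasDerivWithinAt hfc hp hq).derivWithin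
      (uniqueDiffOn_Icc zero_lt_one q hq)), mul_inv_cancel_left₀ hp.ne']
  · simp [genForm, hgw.apply_zero_momentum hq]

end Witness

section Boundary

variable {Ω : Type*} [MeasurableSpace Ω] {Pr : Measure Ω} [IsProbabilityMeasure Pr]
  {φ : Measure ℝ} {w : ℕ → Ω → ℝ} {f g : ℝ × ℝ → ℝ} {p : ℝ}

theorem IsGenWitness.tendsto_Pop (hw : ∀ i ω, 0 < w i ω)
    (hS : ∀ ω, Tendsto (Sn (tauOf w ω)) atTop atTop) (hgw : IsGenWitness Pr w f g) {x : ℝ × ℝ}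
    (hx : x ∈ box1) : Tendsto (fun t => Pop Pr w f t x) (𝓝[>] 0) (𝓝 (f x)) := by
  obtain ⟨-, ⟨C, hgb⟩, heq⟩ := hgw
  rw [← tendsto_sub_nhds_zero_iff]
  refine squeeze_zero_norm' (a := fun t => C * t) ?_ ?_
  · filter_upwards [self_mem_nhdsWithin] with t (ht : 0 < t)
    rw [heq t ht.le _ hx, add_sub_cancel_left]
    have := intervalIntegral.norm_integral_le_of_norm_le_const
      (f := fun s => Pop Pr w g s x) fun s hs =>
        (Real.norm_eq_abs _).trans_le (abs_Pop_le hw hS hx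
          (by rw [uIoc_of_le ht.le] at hs; exact hs.1.le) hgb)
    rwa [sub_zero, abs_of_pos ht] at this
  · simpa using (tendsto_nhdsWithin_of_tendsto_nhds (continuous_const_mul C).continuousAt.tendsto
      : Tendsto (fun t : ℝ => C * t) (𝓝[>] 0) (𝓝 (C * 0)))

variable (hwm : ∀ i, Measurable (w i)) (hw : IsIIDSpeeds Pr w φ)
  (hS : ∀ ω, Tendsto (Sn (tauOf w ω)) atTop atTop) (hfc : ContinuousOn f box1) {B : ℝ}
  (hfb : ∀ x ∈ box1, |f x| ≤ B) (hp : 0 ≤ p)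
include hwm hw hS hfc hfb hp

theorem tendsto_Pop_one :
    Tendsto (fun t => Pop Pr w f t (1, p)) (𝓝[>] 0) (𝓝 (∫ ω, f (0, w 1 ω) ∂Pr)) := by
  have hmem : ∀ ω t, 0 ≤ t → Fmap 1 p t (tauOf w ω) ∈ box1 := fun ω t ht =>
    Fmap_mem_box1 (tauOf_pos hw.2.2 ω) (hS ω) ⟨⟨zero_le_one, le_rfl⟩, hp⟩ ht
  refine tendsto_integral_filter_of_dominated_convergence (fun _ => B) ?_ ?_ (integrable_const B)
    (.of_forall fun ω => ?_)
  · filter_upwards [self_mem_nhdsWithin] with t (ht : 0 < t)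
    exact ((continuous_comp_projBox1 hfc).measurable.comp
      ((measurable_Fmap_tauOf hwm hw hS 1 p).comp
        (measurable_const.prodMk measurable_id))).aestronglyMeasurable.congr
      (.of_forall fun ω => congrArg f (projBox1_of_mem (hmem ω t ht.le)))
  · filter_upwards [self_mem_nhdsWithin] with t (ht : 0 < t)
    exact .of_forall fun ω => (Real.norm_eq_abs _).trans_le (hfb _ (hmem ω t ht.le))
  · have hw₁ := hw.2.2 1 ω
    have hnear : ∀ᶠ t in 𝓝[>] (0:ℝ), t ∈ Ioo 0 (tauOf w ω 1) :=
      Ioo_mem_nhdsGT (tauOf_pos hw.2.2 ω 1)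
    have hpath : Tendsto (fun t => (w 1 ω * t, w 1 ω)) (𝓝[>] 0) (𝓝[box1] (0, w 1 ω)) := by
      refine tendsto_nhdsWithin_iff.2 ⟨tendsto_nhdsWithin_of_tendsto_nhds (by
        simpa using ((continuous_const_mul (w 1 ω)).prodMk continuous_const).tendsto (0:ℝ)),
        hnear.mono fun t ht => ?_⟩
      have := mul_lt_mul_of_pos_left ht.2 hw₁
      rw [tauOf, mul_inv_cancel₀ hw₁.ne'] at this
      exact ⟨⟨(mul_pos hw₁ ht.1).le, this.le⟩, mem_Ici.2 hw₁.le⟩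
    refine ((hfc _ ⟨⟨le_rfl, zero_le_one⟩, mem_Ici.2 hw₁.le⟩).tendsto.comp hpath).congr' ?_
    filter_upwards [hnear] with t ht
    simp [Fmap_one_of_lt (tauOf_pos hw.2.2 ω) (hS ω) hp ⟨ht.1.le, ht.2⟩, tauOf]

theorem IsGenWitness.boundary (hgw : IsGenWitness Pr w f g) : f (1, p) = ∫ y, f (0, y) ∂φ :=
  (tendsto_nhds_unique (hgw.tendsto_Pop hw.2.2 hS ⟨⟨zero_le_one, le_rfl⟩, mem_Ici.2 hp⟩)
    (tendsto_Pop_one hwm hw hS hfc hfb hp)).trans (integral_comp_speed hwm hw hfc)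

end Boundary

theorem isGenWitness_genForm {Ω : Type*} [MeasurableSpace Ω] {Pr : Measure Ω}
    [IsProbabilityMeasure Pr] {φ : Measure ℝ} {w : ℕ → Ω → ℝ} {f : ℝ × ℝ → ℝ}
    (hwm : ∀ i, Measurable (w i)) (hw : IsIIDSpeeds Pr w φ)
    (hS : ∀ ω, Tendsto (Sn (tauOf w ω)) atTop atTop) (hfc : ContinuousOn f box1) {B : ℝ}
    (hfb : ∀ x ∈ box1, |f x| ≤ B)
    (hdiff : ∀ x ∈ box1, 0 < x.2 → DifferentiableWithinAt ℝ (fun q => f (q, x.2)) (Icc 0 1) x.1)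
    (hgc : ContinuousOn (genForm f) box1) {Bg : ℝ} (hgb : ∀ x ∈ box1, |genForm f x| ≤ Bg)
    (hbdy : ∀ p, 0 ≤ p → f (1, p) = ∫ y, f (0, y) ∂φ) :
    IsGenWitness Pr w f (genForm f) := by
  refine ⟨hgc, ⟨Bg, hgb⟩, fun t ht ⟨q, p⟩ hx => ?_⟩
  by_cases h : p * t < 1 - q
  · exact Pop_eq_add_integral_of_lt hfc hgc hdiff hx ht h
  · exact Pop_eq_add_integral_of_not_lt hwm hw hS hfc hfb hgc hgb hdiff hbdy hx ht h

/-- Characterization of the generator: a bounded continuous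
`f : [0,1] × [0,∞) → ℝ` belongs to `D(L)` if and only if `(q,p) ↦ p ∂f/∂q` is bounded
continuous (with `f` differentiable in `q` for `p > 0`) and `f` satisfies the boundary
condition `f(1,p) = ∫ f(0,1/τ) ψ(dτ)`; in that case `L f = p ∂f/∂q`. -/
theorem generator_characterization (φ : Measure ℝ) (hφ : IsLawOnPos φ)
    {Ω' : Type} [MeasurableSpace Ω'] (Pr : Measure Ω') [IsProbabilityMeasure Pr]
    (v : ℕ → Ω' → ℝ) (hv : IsIIDSpeeds Pr v φ)
    (f : ℝ × ℝ → ℝ) (hfc : ContinuousOn f box1) (hfb : ∃ B, ∀ x ∈ box1, |f x| ≤ B) :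
    ((∃ g, IsGenWitness Pr v f g) ↔
      ((∀ x ∈ box1, 0 < x.2 →
          DifferentiableWithinAt ℝ (fun q => f (q, x.2)) (Icc (0:ℝ) 1) x.1) ∧
        ContinuousOn (genForm f) box1 ∧ (∃ B, ∀ x ∈ box1, |genForm f x| ≤ B) ∧
        ∀ p : ℝ, 0 ≤ p →
          f (1, p) = ∫ τ, f (0, τ⁻¹) ∂(Measure.map (fun u : ℝ => u⁻¹) φ))) ∧
    ∀ g, IsGenWitness Pr v f g → EqOn g (genForm f) box1 := by
  have : IsProbabilityMeasure φ := hφ.1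
  obtain ⟨w, hwm, hw, hS, hvw⟩ := hv.exists_version_tendsto_Sn
  obtain ⟨B, hfb⟩ := hfb
  have hwit : ∀ g, IsGenWitness Pr v f g ↔ IsGenWitness Pr w f g := fun g => by
    rw [IsGenWitness, IsGenWitness, Pop_congr hvw]
  have hψ : ∫ τ, f (0, τ⁻¹) ∂(Measure.map (fun u : ℝ => u⁻¹) φ) = ∫ y, f (0, y) ∂φ :=
    integral_map_inv φ fun y => f (0, y)
  simp only [hwit, hψ]
  refine ⟨⟨fun ⟨g, hgw⟩ => ?_, fun ⟨hdiff, hgc, ⟨Bg, hgb⟩, hbdy⟩ =>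
    ⟨genForm f, isGenWitness_genForm hwm hw hS hfc hfb hdiff hgc hgb hbdy⟩⟩,
    fun g hgw => hgw.eqOn_genForm hfc⟩
  have hEq := hgw.eqOn_genForm hfc
  obtain ⟨Bg, hgb⟩ := hgw.2.1
  exact ⟨fun x hx hp => (hgw.hasDerivWithinAt hfc hp hx.1).differentiableWithinAt,
    hgw.1.congr hEq.symm, ⟨Bg, fun x hx => hEq hx ▸ hgb x hx⟩,
    fun p hp => hgw.boundary hwm hw hS hfc hfb hp⟩

end RSP
end
end
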